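/- arXiv:1401.5917 — 8 statements merged into one kernel-verified Lean document; each statement's English description precedes it below -/
import Mathlib

section
/- Let A and B be bounded normal operators on a complex Hilbert space H and let λ be a nonzero complex number such that AB = λBA and AB ≠ 0. Then both AB and BA are normal operators. -/
open NormedSpace Bornology

section Fuglede

variable {R : Type*} [NormedRing R] [NormedAlgebra ℂ R] [StarRing R] [CStarRing R]
  [CompleteSpace R] [StarModule ℂ R]

private lemma aux_exp_conj (M N X : R) (h : M * X = X * N) (z : ℂ) :
    exp (z • M) * X * exp ((-z) • N) = X := by
  set g : ℂ → R := fun z => exp (z • M) * X * exp ((-z) • N) with hg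
  have hd : ∀ w : ℂ, HasDerivAt g 0 w := by
    intro w
    have h1 : HasDerivAt (fun u : ℂ => exp (u • M)) (exp (w • M) * M) w :=
      hasDerivAt_exp_smul_const M w
    have h2 : HasDerivAt (fun u : ℂ => exp ((-u) • N))
        ((-1 : ℂ) • (exp ((-w) • N) * N)) w :=
      HasDerivAt.scomp w (hasDerivAt_exp_smul_const N (-w)) (hasDerivAt_neg w)
    have h3 := (h1.mul_const X).mul h2
    convert h3 using 1
    · rfl
    have hc : exp ((-w) • N) * N = N * exp ((-w) • N) :=
      (((Commute.refl N).smul_left (-w)).exp_left).eq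
    rw [neg_one_smul, mul_neg, hc,
      show exp (w • M) * X * (N * exp ((-w) • N))
          = exp (w • M) * (X * N) * exp ((-w) • N) by noncomm_ring,
      ← h,
      show exp (w • M) * M * X * exp ((-w) • N)
          = exp (w • M) * (M * X) * exp ((-w) • N) by noncomm_ring]
    exact (add_neg_cancel _).symm
  have hconst : g z = g 0 :=
    is_const_of_fderiv_eq_zero (fun w => (hd w).differentiableAt)
      (fun w => by rw [(hd w).hasFDerivAt.fderiv]; ext; simp) z 0
  simpa [hg] using hconst

private lemma aux_intertwine (M N X : R) (hk : ∀ z : ℂ, exp (z • M) * X * exp ((-z) • N) = X)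
    (z : ℂ) : exp (z • M) * X = X * exp (z • N) := by
  let _ : NormedAlgebra ℚ R := .restrictScalars ℚ ℂ R
  have h1 : exp ((-z) • N) * exp (z • N) = 1 := by
    rw [← exp_add_of_commute (((Commute.refl N).smul_left (-z)).smul_right z)]
    simp
  calc exp (z • M) * X = exp (z • M) * X * (exp ((-z) • N) * exp (z • N)) := by
        rw [h1, mul_one]
    _ = (exp (z • M) * X * exp ((-z) • N)) * exp (z • N) := by noncomm_ring
    _ = X * exp (z • N) := by rw [hk z]

/-- Fuglede–Putnam theorem in a unital C*-algebra. -/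
private lemma fuglede (M N X : R) (hM : star M * M = M * star M) (hN : star N * N = N * star N)
    (h : M * X = X * N) : star M * X = X * star N := by
  let _ : NormedAlgebra ℚ R := .restrictScalars ℚ ℂ R
  have key : ∀ z : ℂ, exp (z • M) * X * exp ((-z) • N) = X := aux_exp_conj M N X h
  set F : ℂ → R := fun w => exp (w • star M) * X * exp ((-w) • star N) with hF
  have hbound : ∀ w : ℂ, ‖F w‖ ≤ ‖X‖ := by
    intro w
    set c := star w with hc
    set S : R := w • star M - c • M with hS
    set T : R := c • N - w • star N with hT
    have hSskew : S ∈ skewAdjoint R := by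
      rw [skewAdjoint.mem_iff, hS, hc]
      simp only [star_sub, star_smul, star_star]
      exact (neg_sub _ _).symm
    have hTskew : T ∈ skewAdjoint R := by
      rw [skewAdjoint.mem_iff, hT, hc]
      simp only [star_sub, star_smul, star_star]
      exact (neg_sub _ _).symm
    have hMcomm : Commute (star M) M := hM
    have hNcomm : Commute (star N) N := hN
    have hSM : Commute S (c • M) := by
      refine Commute.sub_left ?_ (((Commute.refl M).smul_left c).smul_right c)
      exact (hMcomm.smul_left w).smul_right c
    have hNT : Commute ((-c) • N) T := by
      refine Commute.sub_right ((Commute.refl N).smul_left (-c) |>.smul_right c) ?_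
      exact (hNcomm.symm.smul_left (-c)).smul_right w
    have hexpM : exp (w • star M) = exp S * exp (c • M) := by
      rw [← exp_add_of_commute hSM, hS, sub_add_cancel]
    have hexpN : exp ((-w) • star N) = exp ((-c) • N) * exp T := by
      rw [← exp_add_of_commute hNT, hT]
      congr 1
      rw [neg_smul, neg_smul]
      abel
    have hmid : exp (c • M) * X * exp ((-c) • N) = X := key c
    have hFw : F w = exp S * X * exp T := by
      show exp (w • star M) * X * exp ((-w) • star N) = _
      rw [hexpM, hexpN, show exp S * exp (c • M) * X * (exp ((-c) • N) * exp T)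
        = exp S * (exp (c • M) * X * exp ((-c) • N)) * exp T by noncomm_ring, hmid]
    rw [hFw]
    have hU : exp S ∈ unitary R := exp_mem_unitary_of_mem_skewAdjoint hSskew
    have hV : exp T ∈ unitary R := exp_mem_unitary_of_mem_skewAdjoint hTskew
    rw [mul_assoc, CStarRing.norm_coe_unitary_mul ⟨exp S, hU⟩,
      CStarRing.norm_mul_coe_unitary X ⟨exp T, hV⟩]
  have hdiff : Differentiable ℂ F := by
    intro w
    have h1 := (hasDerivAt_exp_smul_const (star M) w).differentiableAt
    have h2 := (HasDerivAt.scomp w (hasDerivAt_exp_smul_const (star N) (-w))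
      (hasDerivAt_neg w)).differentiableAt
    exact (h1.mul_const X).mul h2
  have hb : IsBounded (Set.range F) :=
    isBounded_iff_forall_norm_le.2 ⟨‖X‖, by rintro _ ⟨w, rfl⟩; exact hbound w⟩
  have hFconst : ∀ w : ℂ, F w = F 0 := fun w => hdiff.apply_eq_apply_of_bounded hb w 0
  have hkey2 : ∀ w : ℂ, exp (w • star M) * X * exp ((-w) • star N) = X := by
    intro w
    have := hFconst w
    rw [hF] at this
    simpa using this
  have hint : ∀ w : ℂ, exp (w • star M) * X = X * exp (w • star N) :=
    aux_intertwine _ _ _ hkey2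
  have hEq : (fun w : ℂ => exp (w • star M) * X) = fun w : ℂ => X * exp (w • star N) :=
    funext hint
  have hd1 : HasDerivAt (fun w : ℂ => exp (w • star M) * X)
      ((exp ((0 : ℂ) • star M) * star M) * X) 0 :=
    (hasDerivAt_exp_smul_const (star M) 0).mul_const X
  have hd2 : HasDerivAt (fun w : ℂ => X * exp (w • star N))
      (X * (exp ((0 : ℂ) • star N) * star N)) 0 :=
    (hasDerivAt_exp_smul_const (star N) 0).const_mul X
  rw [← hEq] at hd2
  have := hd1.unique hd2
  simpa using this

private lemma main_cstar (A B : R) (l : ℂ) (hl : l ≠ 0)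
    (hA : star A * A = A * star A) (hB : star B * B = B * star B)
    (hcomm : A * B = l • (B * A)) (hne : A * B ≠ 0) :
    star (A * B) * (A * B) = (A * B) * star (A * B) ∧
    star (B * A) * (B * A) = (B * A) * star (B * A) := by
  have hlA : star (l • A) * (l • A) = (l • A) * star (l • A) := by
    rw [star_smul, smul_mul_assoc, mul_smul_comm, smul_smul, smul_mul_assoc, mul_smul_comm,
      smul_smul, hA, mul_comm l (star l)]
  have hlB : star (l • B) * (l • B) = (l • B) * star (l • B) := by
    rw [star_smul, smul_mul_assoc, mul_smul_comm, smul_smul, smul_mul_assoc, mul_smul_comm,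
      smul_smul, hB, mul_comm l (star l)]
  have h1 : A * B = B * (l • A) := by rw [hcomm, mul_smul_comm]
  have e1 := fuglede A (l • A) B hA hlA h1
  have r2 : star A * B = star l • (B * star A) := by
    rw [e1, star_smul, mul_smul_comm]
  have h2 : (l • B) * A = A * B := by rw [hcomm, smul_mul_assoc]
  have e2 := fuglede (l • B) B A hlB hB h2
  have r2' : A * star B = star l • (star B * A) := by
    rw [← e2, star_smul, smul_mul_assoc]
  have r3 : star B * A = l • (A * star B) := by
    calc star B * A = star (star A * B) := by rw [star_mul, star_star]
      _ = star (star l • (B * star A)) := by rw [r2]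
      _ = l • (A * star B) := by rw [star_smul, star_star, star_mul, star_star]
  have hne2 : A * star B ≠ 0 := by
    intro h0
    have h3 : (A * B) * star (A * B) = 0 := by
      rw [star_mul]
      calc A * B * (star B * star A) = A * (B * star B) * star A := by noncomm_ring
        _ = A * (star B * B) * star A := by rw [hB]
        _ = (A * star B) * (B * star A) := by noncomm_ring
        _ = 0 := by rw [h0, zero_mul]
    have hnorm := CStarRing.norm_self_mul_star (x := A * B)
    rw [h3, norm_zero] at hnorm
    exact hne (norm_eq_zero.mp (mul_self_eq_zero.mp hnorm.symm))
  have h4 : (1 - star l * l) • (A * star B) = 0 := by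
    rw [sub_smul, one_smul, ← smul_smul, ← r3, ← r2', sub_self]
  have hul : star l * l = 1 := by
    rcases smul_eq_zero.mp h4 with h5 | h5
    · exact (sub_eq_zero.mp h5).symm
    · exact absurd h5 hne2
  have r4 : star B * star A = star l • (star A * star B) := by
    calc star B * star A = star (A * B) := (star_mul _ _).symm
      _ = star (l • (B * A)) := by rw [hcomm]
      _ = star l • (star A * star B) := by rw [star_smul, star_mul]
  have r5 : star A * star B = l • (star B * star A) := by
    calc star A * star B = (star l * l) • (star A * star B) := by rw [hul, one_smul]
      _ = l • (star l • (star A * star B)) := by rw [smul_smul, mul_comm]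
      _ = l • (star B * star A) := by rw [← r4]
  have hPB : (A * star A) * B = B * (A * star A) := by
    calc A * star A * B = A * (star A * B) := by rw [mul_assoc]
      _ = A * (star l • (B * star A)) := by rw [r2]
      _ = star l • (A * B * star A) := by rw [mul_smul_comm, ← mul_assoc]
      _ = star l • ((l • (B * A)) * star A) := by rw [hcomm]
      _ = (star l * l) • (B * (A * star A)) := by rw [smul_mul_assoc, smul_smul, mul_assoc]
      _ = B * (A * star A) := by rw [hul, one_smul]
  have hPB' : (A * star A) * star B = star B * (A * star A) := by
    calc A * star A * star B = A * (star A * star B) := by rw [mul_assoc]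
      _ = A * (l • (star B * star A)) := by rw [r5]
      _ = l • (A * star B * star A) := by rw [mul_smul_comm, ← mul_assoc]
      _ = l • ((star l • (star B * A)) * star A) := by rw [r2']
      _ = (l * star l) • (star B * (A * star A)) := by rw [smul_mul_assoc, smul_smul, mul_assoc]
      _ = star B * (A * star A) := by rw [mul_comm, hul, one_smul]
  have left : star (A * B) * (A * B) = (B * star B) * (A * star A) := by
    calc star (A * B) * (A * B) = star B * ((star A * A) * B) := by rw [star_mul]; noncomm_ring
      _ = star B * ((A * star A) * B) := by rw [hA]
      _ = star B * (B * (A * star A)) := by rw [hPB]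
      _ = (star B * B) * (A * star A) := by noncomm_ring
      _ = (B * star B) * (A * star A) := by rw [hB]
  have right : (A * B) * star (A * B) = (B * star B) * (A * star A) := by
    calc (A * B) * star (A * B) = (A * B) * (star B * star A) := by rw [star_mul]
      _ = (l • (B * A)) * (star B * star A) := by rw [hcomm]
      _ = l • (B * ((A * star B) * star A)) := by rw [smul_mul_assoc]; congr 1; noncomm_ring
      _ = l • (B * ((star l • (star B * A)) * star A)) := by rw [r2']
      _ = (l * star l) • (B * (star B * A * star A)) := by
          rw [smul_mul_assoc, mul_smul_comm, smul_smul]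
      _ = (B * star B) * (A * star A) := by rw [mul_comm, hul, one_smul]; noncomm_ring
  have first : star (A * B) * (A * B) = (A * B) * star (A * B) := left.trans right.symm
  refine ⟨first, ?_⟩
  have hBA : B * A = l⁻¹ • (A * B) := by
    rw [hcomm, smul_smul, inv_mul_cancel₀ hl, one_smul]
  rw [hBA, star_smul, smul_mul_assoc, mul_smul_comm, smul_smul, smul_mul_assoc, mul_smul_comm,
    smul_smul, first, mul_comm]

end Fuglede

theorem stmt_0 {H : Type*} [NormedAddCommGroup H] [InnerProductSpace ℂ H] [CompleteSpace H]
    (A B : H →L[ℂ] H) (l : ℂ) (hl : l ≠ 0)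
    (hA : ContinuousLinearMap.adjoint A * A = A * ContinuousLinearMap.adjoint A)
    (hB : ContinuousLinearMap.adjoint B * B = B * ContinuousLinearMap.adjoint B)
    (hcomm : A * B = l • (B * A)) (hne : A * B ≠ 0) :
    (ContinuousLinearMap.adjoint (A * B) * (A * B) = (A * B) * ContinuousLinearMap.adjoint (A * B)) ∧
    (ContinuousLinearMap.adjoint (B * A) * (B * A) = (B * A) * ContinuousLinearMap.adjoint (B * A)) := by
  rw [← ContinuousLinearMap.star_eq_adjoint] at hA hB ⊢
  rw [← ContinuousLinearMap.star_eq_adjoint]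
  exact main_cstar A B l hl hA hB hcomm hne
end

section
/- Let A and B be bounded self-adjoint operators on a complex Hilbert space H and let λ be a complex number such that AB = λBA and AB ≠ 0. If σ(A) ∩ σ(−A) ⊆ {0} or σ(B) ∩ σ(−B) ⊆ {0} (where σ denotes the spectrum), then λ = 1. -/
open StarAlgebra

lemma commute_cfc_real {H : Type*} [NormedAddCommGroup H] [InnerProductSpace ℂ H] [CompleteSpace H]
    (C B : H →L[ℂ] H) (hC : IsSelfAdjoint C) (hcomm : B * C = C * B)
    (hcommstar : star B * C = C * star B) (ψ : ℝ → ℝ) :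
    B * cfc ψ C = cfc ψ C * B := by
  by_cases hcont : ContinuousOn ψ (spectrum ℝ C)
  · have hn : IsStarNormal C := hC.isStarNormal
    rw [cfc_real_eq_complex ψ hC]
    set g : ℂ → ℂ := fun x => (ψ x.re : ℂ) with hg_def
    have hg : ContinuousOn g (spectrum ℂ C) := by
      have himg : spectrum ℂ C = (Complex.ofReal : ℝ → ℂ) '' spectrum ℝ C :=
        (hC.spectrumRestricts.algebraMap_image).symm
      rw [himg]
      refine Complex.continuous_ofReal.comp_continuousOn ?_
      refine hcont.comp Complex.continuous_re.continuousOn ?_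
      rintro _ ⟨t, ht, rfl⟩
      simpa using ht
    have hmem : cfc g C ∈ elemental ℂ C := by
      rw [cfc_apply g C hn hg, cfcHom_eq_of_isStarNormal]
      exact SetLike.coe_mem _
    have hclosed : IsClosed ((StarSubalgebra.centralizer ℂ {B} : StarSubalgebra ℂ (H →L[ℂ] H)) :
        Set (H →L[ℂ] H)) := by
      rw [StarSubalgebra.coe_centralizer]
      have : (({B} : Set (H →L[ℂ] H)) ∪ star {B}).centralizer =
          ⋂ m ∈ (({B} : Set (H →L[ℂ] H)) ∪ star {B}), {z | m * z = z * m} := by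
        ext z; simp [Set.mem_centralizer_iff]
      rw [this]
      exact isClosed_biInter fun m _ => isClosed_eq (continuous_mul_left m)
        (continuous_mul_right m)
    have hCmem : C ∈ StarSubalgebra.centralizer ℂ ({B} : Set (H →L[ℂ] H)) := by
      rw [StarSubalgebra.mem_centralizer_iff]
      rintro x rfl
      exact ⟨hcomm, hcommstar⟩
    have hle : elemental ℂ C ≤ StarSubalgebra.centralizer ℂ ({B} : Set (H →L[ℂ] H)) :=
      elemental.le_of_mem hclosed hCmem
    have hc := hle hmem
    rw [StarSubalgebra.mem_centralizer_iff] at hc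
    exact (hc B rfl).1
  · rw [cfc_apply_of_not_continuousOn C hcont, mul_zero, zero_mul]

open Metric

lemma commute_of_anticommute {H : Type*} [NormedAddCommGroup H] [InnerProductSpace ℂ H]
    [CompleteSpace H] (A B : H →L[ℂ] H) (hA : IsSelfAdjoint A) (hB : IsSelfAdjoint B)
    (hac : A * B = -(B * A))
    (hs : ∀ t : ℝ, t ∈ spectrum ℝ A → -t ∈ spectrum ℝ A → t = 0) :
    A * B = B * A := by
  set P : Set ℝ := spectrum ℝ A with hP
  set Kp : Set ℝ := ((fun t => t ^ 2) '' (P ∩ Set.Ici 0)) ∪ {0} with hKp_def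
  set Km : Set ℝ := ((fun t => t ^ 2) '' (P ∩ Set.Iic 0)) ∪ {0} with hKm_def
  have hPc : IsCompact P := spectrum.isCompact A
  have hKp_closed : IsClosed Kp :=
    (((hPc.inter_right isClosed_Ici).image (continuous_pow 2)).union isCompact_singleton).isClosed
  have hKm_closed : IsClosed Km :=
    (((hPc.inter_right isClosed_Iic).image (continuous_pow 2)).union isCompact_singleton).isClosed
  have h0p : (0 : ℝ) ∈ Kp := Or.inr rfl
  have h0m : (0 : ℝ) ∈ Km := Or.inr rfl
  have hdisj : ∀ s, s ∈ Kp → s ∈ Km → s = 0 := by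
    rintro s (⟨t, ⟨htP, ht0⟩, rfl⟩ | h) hm
    · rcases hm with ⟨r, ⟨hrP, hr0⟩, h⟩ | h
      · simp only at h ht0 hr0 ⊢
        have ht0' : (0:ℝ) ≤ t := ht0
        have hr0' : r ≤ 0 := hr0
        have hfac : (r + t) * (r - t) = 0 := by ring_nf; nlinarith [h]
        rcases mul_eq_zero.mp hfac with h1 | h1
        · have ht' : t = 0 := hs t htP (by rwa [show -t = r by linarith])
          simp [ht']
        · have ht' : t = 0 := le_antisymm (by linarith) ht0'
          simp [ht']
      · exact h
    · exact h
  set u : ℝ → ℝ := fun s => (infDist s Km - infDist s Kp) / (infDist s Km + infDist s Kp)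
    with hu_def
  set ψ : ℝ → ℝ := fun s => Real.sqrt s * u s with hψ_def
  have hune : ∀ s, |u s| ≤ 1 := by
    intro s
    rcases eq_or_ne (infDist s Km + infDist s Kp) 0 with h | h
    · simp [hu_def, h]
    · have ha := infDist_nonneg (x := s) (s := Km)
      have hb := infDist_nonneg (x := s) (s := Kp)
      rw [hu_def, abs_div, abs_of_nonneg (by linarith : (0:ℝ) ≤ infDist s Km + infDist s Kp)]
      rw [div_le_one (lt_of_le_of_ne (by linarith) (Ne.symm h))]
      rw [abs_sub_le_iff]
      constructor <;> linarith
  have hψ0 : ψ 0 = 0 := by simp [hψ_def]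
  have hψle : ∀ s, |ψ s| ≤ Real.sqrt |s| := by
    intro s
    rw [hψ_def]
    simp only [abs_mul, abs_of_nonneg (Real.sqrt_nonneg s)]
    calc Real.sqrt s * |u s| ≤ Real.sqrt |s| * 1 := by
          apply mul_le_mul (Real.sqrt_le_sqrt (le_abs_self s)) (hune s) (abs_nonneg _)
            (Real.sqrt_nonneg _)
      _ = Real.sqrt |s| := mul_one _
  have hcontOn : ContinuousOn ψ (Kp ∪ Km) := by
    intro s hsmem
    by_cases hs0 : s = 0
    · subst hs0
      show Filter.Tendsto ψ (nhdsWithin 0 (Kp ∪ Km)) (nhds (ψ 0))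
      rw [hψ0]
      have h2 : Filter.Tendsto (fun x : ℝ => Real.sqrt |x|) (nhdsWithin 0 (Kp ∪ Km))
          (nhds 0) := by
        have : Filter.Tendsto (fun x : ℝ => Real.sqrt |x|) (nhds 0) (nhds (Real.sqrt |0|)) :=
          (Real.continuous_sqrt.comp continuous_abs).tendsto 0
        simpa using this.mono_left nhdsWithin_le_nhds
      exact squeeze_zero_norm (fun x => by rw [Real.norm_eq_abs]; exact hψle x) h2
    · apply ContinuousAt.continuousWithinAt
      have hden : infDist s Km + infDist s Kp ≠ 0 := by
        intro h
        have ha := infDist_nonneg (x := s) (s := Km)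
        have hb := infDist_nonneg (x := s) (s := Kp)
        have h1 : infDist s Km = 0 := by linarith
        have h2 : infDist s Kp = 0 := by linarith
        exact hs0 (hdisj s ((hKp_closed.mem_iff_infDist_zero ⟨0, h0p⟩).mpr h2)
          ((hKm_closed.mem_iff_infDist_zero ⟨0, h0m⟩).mpr h1))
      exact (Real.continuous_sqrt.continuousAt).mul
        ((((continuous_infDist_pt Km).continuousAt.sub
          (continuous_infDist_pt Kp).continuousAt)).div
          (((continuous_infDist_pt Km).continuousAt.add
            (continuous_infDist_pt Kp).continuousAt)) hden)
  have hψP : ∀ t ∈ P, ψ (t ^ 2) = t := by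
    intro t ht
    rcases lt_trichotomy t 0 with h | h | h
    · have hmem : t ^ 2 ∈ Km := Or.inl ⟨t, ⟨ht, le_of_lt h⟩, rfl⟩
      have hnot : t ^ 2 ∉ Kp := fun hc => by
        have := hdisj _ hc hmem
        exact h.ne (pow_eq_zero_iff (n := 2) (by norm_num) |>.mp this)
      have h1 : infDist (t ^ 2) Km = 0 := infDist_zero_of_mem hmem
      have h2 : 0 < infDist (t ^ 2) Kp :=
        (hKp_closed.notMem_iff_infDist_pos ⟨0, h0p⟩).mp hnot
      rw [hψ_def, hu_def]
      simp only [h1, zero_sub, zero_add, neg_div, div_self h2.ne']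
      rw [Real.sqrt_sq_eq_abs, abs_of_neg h]
      ring
    · simp [h, hψ0]
    · have hmem : t ^ 2 ∈ Kp := Or.inl ⟨t, ⟨ht, le_of_lt h⟩, rfl⟩
      have hnot : t ^ 2 ∉ Km := fun hc => by
        have := hdisj _ hmem hc
        exact h.ne' (pow_eq_zero_iff (n := 2) (by norm_num) |>.mp this)
      have h1 : infDist (t ^ 2) Kp = 0 := infDist_zero_of_mem hmem
      have h2 : 0 < infDist (t ^ 2) Km :=
        (hKm_closed.notMem_iff_infDist_pos ⟨0, h0m⟩).mp hnot
      rw [hψ_def, hu_def]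
      simp only [h1, sub_zero, add_zero, div_self h2.ne']
      rw [Real.sqrt_sq_eq_abs, abs_of_pos h]
      ring
  -- A² commutes with B
  have hA2 : IsSelfAdjoint (A ^ 2) := hA.pow 2
  have key : A ^ 2 * B = B * A ^ 2 := by
    calc A ^ 2 * B = A * (A * B) := by rw [pow_two, mul_assoc]
      _ = -(A * (B * A)) := by rw [hac, mul_neg]
      _ = -((A * B) * A) := by rw [mul_assoc]
      _ = (B * A) * A := by rw [hac, neg_mul, neg_neg]
      _ = B * A ^ 2 := by rw [pow_two, mul_assoc]
  have hsub : (fun t : ℝ => t ^ 2) '' P ⊆ Kp ∪ Km := by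
    rintro _ ⟨t, ht, rfl⟩
    rcases le_or_gt 0 t with h | h
    · exact Or.inl (Or.inl ⟨t, ⟨ht, h⟩, rfl⟩)
    · exact Or.inr (Or.inl ⟨t, ⟨ht, le_of_lt h⟩, rfl⟩)
  have hcontψ : ContinuousOn ψ ((fun t : ℝ => t ^ 2) '' P) := hcontOn.mono hsub
  have hAeq : cfc ψ (A ^ 2) = A := by
    rw [← cfc_comp_pow ψ 2 A hcontψ hA]
    calc cfc (fun t : ℝ => ψ (t ^ 2)) A = cfc (id : ℝ → ℝ) A := cfc_congr fun t ht => hψP t ht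
      _ = A := cfc_id ℝ A
  have hcomm := commute_cfc_real (A ^ 2) B hA2 key.symm (by rw [hB.star_eq]; exact key.symm) ψ
  rw [hAeq] at hcomm
  exact hcomm.symm
open scoped Pointwise

lemma real_spec_of_complex {H : Type*} [NormedAddCommGroup H] [InnerProductSpace ℂ H]
    [CompleteSpace H] (A : H →L[ℂ] H) (hA : IsSelfAdjoint A)
    (hsp : spectrum ℂ A ∩ spectrum ℂ (-A) ⊆ {0}) :
    ∀ t : ℝ, t ∈ spectrum ℝ A → -t ∈ spectrum ℝ A → t = 0 := by
  intro t ht hnt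
  have h1 : (t : ℂ) ∈ spectrum ℂ A := by
    rw [← hA.spectrumRestricts.algebraMap_image]
    exact ⟨t, ht, rfl⟩
  have h2 : (t : ℂ) ∈ spectrum ℂ (-A) := by
    rw [← spectrum.neg_eq]
    rw [Set.mem_neg]
    have : ((-t : ℝ) : ℂ) ∈ spectrum ℂ A := by
      rw [← hA.spectrumRestricts.algebraMap_image]
      exact ⟨-t, hnt, rfl⟩
    simpa using this
  have := hsp ⟨h1, h2⟩
  simp only [Set.mem_singleton_iff] at this
  exact_mod_cast this

theorem stmt_1 {H : Type*} [NormedAddCommGroup H] [InnerProductSpace ℂ H] [CompleteSpace H]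
    (A B : H →L[ℂ] H) (l : ℂ)
    (hA : IsSelfAdjoint A) (hB : IsSelfAdjoint B)
    (hcomm : A * B = l • (B * A)) (hne : A * B ≠ 0)
    (hspec : spectrum ℂ A ∩ spectrum ℂ (-A) ⊆ {0} ∨
      spectrum ℂ B ∩ spectrum ℂ (-B) ⊆ {0}) :
    l = 1 := by
  haveI : Nontrivial (H →L[ℂ] H) := ⟨⟨A * B, 0, hne⟩⟩
  have hstar : B * A = star l • (A * B) := by
    have := congrArg star hcomm
    rwa [star_mul, hA.star_eq, hB.star_eq, star_smul, star_mul, hA.star_eq, hB.star_eq] at this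
  have hll : l * star l = 1 := by
    have h2 : A * B = (l * star l) • (A * B) := by
      conv_lhs => rw [hcomm, hstar, smul_smul]
    by_contra hc
    have h3 : (l * star l - 1) • (A * B) = 0 := by
      rw [sub_smul, one_smul, ← h2, sub_self]
    rcases smul_eq_zero.mp h3 with h4 | h4
    · exact hc (by linear_combination h4)
    · exact hne h4
  obtain ⟨μ, hμ⟩ := IsAlgClosed.exists_pow_nat_eq (k := ℂ) (star l) zero_lt_two
  have hμμ : μ * star μ = 1 := by
    have h1 : (μ * star μ) ^ 2 = 1 := by
      have hst : star (μ ^ 2) = l := by rw [hμ, star_star]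
      calc (μ * star μ) ^ 2 = μ ^ 2 * star (μ ^ 2) := by rw [star_pow]; ring
        _ = star l * l := by rw [hμ, star_star]
        _ = 1 := by rw [mul_comm]; exact hll
    have h2 : μ * star μ = (Complex.normSq μ : ℂ) := Complex.mul_conj μ
    rw [h2] at h1 ⊢
    have h3 : (Complex.normSq μ : ℝ) ^ 2 = 1 := by exact_mod_cast h1
    have h4 := Complex.normSq_nonneg μ
    have h5 : Complex.normSq μ = 1 := by nlinarith
    rw [h5]; norm_num
  have hμ0 : μ ≠ 0 := by
    intro h; rw [h] at hμμ; simp at hμμ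
  have hTstar : star (A * B) = star l • (A * B) := by
    rw [star_mul, hA.star_eq, hB.star_eq]; exact hstar
  set Q : H →L[ℂ] H := μ • (A * B) with hQdef
  have hQ : IsSelfAdjoint Q := by
    rw [IsSelfAdjoint, hQdef, star_smul, hTstar, smul_smul, ← hμ]
    congr 1
    linear_combination μ * hμμ
  have hQne : Q ≠ 0 := smul_ne_zero hμ0 hne
  obtain ⟨z, hzQ, hznorm⟩ := spectrum.exists_nnnorm_eq_spectralRadius Q
  have hzne : z ≠ 0 := by
    intro h
    rw [h, hQ.spectralRadius_eq_nnnorm] at hznorm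
    apply hQne
    simp only [nnnorm_zero, ENNReal.coe_zero] at hznorm
    have h2 : ‖Q‖₊ = 0 := by exact_mod_cast hznorm.symm
    simpa using h2
  have hreal : ∀ w ∈ spectrum ℂ Q, ((w.re : ℂ)) = w := fun w hw =>
    hQ.spectrumRestricts.rightInvOn hw
  set μu : ℂˣ := Units.mk0 μ hμ0 with hμu
  have hQspec : spectrum ℂ Q = μu • spectrum ℂ (A * B) :=
    spectrum.unit_smul_eq_smul (R := ℂ) (A * B) μu
  obtain ⟨w, hwT, hwz⟩ := hQspec ▸ hzQ
  have hwz' : μ * w = z := hwz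
  have hwne : w ≠ 0 := by rintro rfl; rw [mul_zero] at hwz'; exact hzne hwz'.symm
  have hwBA : w ∈ spectrum ℂ (B * A) := by
    have heq : spectrum ℂ (A * B) \ {0} = spectrum ℂ (B * A) \ {0} :=
      spectrum.nonzero_mul_comm A B
    have hmem : w ∈ spectrum ℂ (A * B) \ {0} := ⟨hwT, hwne⟩
    rw [heq] at hmem
    exact hmem.1
  have hsl0 : star l ≠ 0 := by
    intro h; rw [h, mul_zero] at hll; exact zero_ne_one hll
  set lu : ℂˣ := Units.mk0 (star l) hsl0 with hlu
  have hBAspec : spectrum ℂ (B * A) = lu • spectrum ℂ (A * B) := by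
    rw [hstar]; exact spectrum.unit_smul_eq_smul (R := ℂ) (A * B) lu
  obtain ⟨w', hw'T, hw'w⟩ := hBAspec ▸ hwBA
  have hw'w' : star l * w' = w := hw'w
  have hz' : μ * w' ∈ spectrum ℂ Q := by
    rw [hQspec]
    exact Set.smul_mem_smul_set (a := μu) hw'T
  have h1 : (((μ * w').re : ℂ)) = μ * w' := hreal _ hz'
  have h2 : ((z.re : ℂ)) = z := hreal z hzQ
  have hzfac : star l * (μ * w') = z := by
    rw [← hwz', ← hw'w']; ring
  have hmw0 : μ * w' ≠ 0 := by
    intro h; rw [h, mul_zero] at hzfac; exact hzne hzfac.symm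
  have hmwre : ((μ * w').re : ℝ) ≠ 0 := by
    intro h
    apply hmw0
    rw [← h1, h]; norm_num
  have hlstar : star l = l := by
    have hfrac : star l = ((z.re / (μ * w').re : ℝ) : ℂ) := by
      rw [Complex.ofReal_div, h1, h2, ← hzfac]
      field_simp
      rw [div_self (right_ne_zero_of_mul hmw0)]
    have := congrArg star hfrac
    rw [star_star] at this
    rw [hfrac, this]
    simp [Complex.star_def, Complex.conj_ofReal]
  have hl2 : l * l = 1 := by rw [← hll, hlstar]
  rcases mul_self_eq_one_iff.mp hl2 with h | h
  · exact h
  · exfalso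
    subst h
    have hac : A * B = -(B * A) := by rw [hcomm, neg_smul, one_smul]
    have habzero : A * B = B * A → False := by
      intro hcom
      apply hne
      have h0 : A * B = -(A * B) := by nth_rewrite 1 [hac]; rw [hcom]
      have h2 : (2 : ℂ) • (A * B) = 0 := by
        rw [two_smul]
        nth_rewrite 2 [h0]
        simp
      rcases smul_eq_zero.mp h2 with h | h
      · norm_num at h
      · exact h
    rcases hspec with hsp | hsp
    · exact habzero (commute_of_anticommute A B hA hB hac (real_spec_of_complex A hA hsp))
    · have hac' : B * A = -(A * B) := by rw [hac, neg_neg]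
      exact habzero
        ((commute_of_anticommute B A hB hA hac' (real_spec_of_complex B hB hsp)).symm)
end

section
/- Let A and B be bounded self-adjoint operators on a complex Hilbert space H and let λ be a complex number such that AB = λBA and AB ≠ 0. If at least one of A, −A, B, −B is a positive operator, then λ = 1. -/
open ComplexConjugate

set_option maxHeartbeats 1000000
set_option synthInstance.maxHeartbeats 200000

lemma key_pos {H : Type*} [NormedAddCommGroup H] [InnerProductSpace ℂ H] [CompleteSpace H]
    (A B : H →L[ℂ] H) (l : ℂ)
    (hA : IsSelfAdjoint A) (hB : IsSelfAdjoint B)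
    (hcomm : A * B = l • (B * A)) (hne : A * B ≠ 0)
    (hApos : A.IsPositive) : l = 1 := by
  haveI : Nontrivial (H →L[ℂ] H) := nontrivial_of_ne _ _ hne
  -- adjoint relation
  have h1 : B * A = conj l • (A * B) := by
    have := congrArg star hcomm
    rwa [star_mul, hA.star_eq, hB.star_eq, star_smul, star_mul, hA.star_eq, hB.star_eq,
      RCLike.star_def] at this
  have habs : l * conj l = 1 := by
    have h2 : A * B = (l * conj l) • (A * B) := by
      conv_lhs => rw [hcomm, h1, smul_smul]
    by_contra h
    have : (1 - l * conj l) • (A * B) = 0 := by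
      rw [sub_smul, one_smul, ← h2, sub_self]
    rcases smul_eq_zero.mp this with h' | h'
    · exact h (by linear_combination -h')
    · exact hne h'
  have hl0 : l ≠ 0 := by
    rintro rfl
    exact hne (by simpa using hcomm)
  -- square root of l
  set μ := Complex.exp (Complex.log l / 2) with hμdef
  have hμ2 : μ * μ = l := by
    rw [← Complex.exp_add, add_halves, Complex.exp_log hl0]
  have hμc : μ * conj μ = 1 := by
    have hsq : (μ * conj μ) * (μ * conj μ) = 1 := by
      rw [mul_mul_mul_comm, hμ2, ← map_mul, hμ2, habs]
    have hre : μ * conj μ = (Complex.normSq μ : ℂ) := Complex.mul_conj μ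
    rw [hre] at hsq ⊢
    norm_cast at hsq ⊢
    have h0 : (0:ℝ) ≤ Complex.normSq μ := Complex.normSq_nonneg μ
    nlinarith
  set T := A * B with hT
  have hTstar : star T = conj l • T := by
    rw [hT, star_mul, hA.star_eq, hB.star_eq, h1]
  -- T is star-normal
  have hnormal : IsStarNormal T := by
    constructor
    show star T * T = T * star T
    rw [hTstar, smul_mul_assoc, mul_smul_comm]
  -- T' = conj μ • T is self-adjoint
  set T' := conj μ • T with hT'
  have hT'sa : IsSelfAdjoint T' := by
    rw [IsSelfAdjoint, hT', star_smul, hTstar, smul_smul, RCLike.star_def,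
      Complex.conj_conj]
    congr 1
    calc μ * conj l = μ * (conj μ * conj μ) := by rw [← map_mul, hμ2]
      _ = (μ * conj μ) * conj μ := by ring
      _ = conj μ := by rw [hμc, one_mul]
  -- square root of A
  have hA0 : 0 ≤ A := (ContinuousLinearMap.nonneg_iff_isPositive A).mpr hApos
  set S := CFC.sqrt (A : H →L[ℂ] H) with hS
  have hSsq : S * S = A := CFC.sqrt_mul_sqrt_self A hA0
  have hSsa : IsSelfAdjoint S := IsSelfAdjoint.of_nonneg (CFC.sqrt_nonneg A)
  -- nonzero spectrum of T is real
  have hSBS : IsSelfAdjoint ((S * B) * S) := by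
    rw [IsSelfAdjoint, star_mul, star_mul, hSsa.star_eq, hB.star_eq, mul_assoc]
  have hspec : spectrum ℂ T \ {0} ⊆ {z : ℂ | z = (z.re : ℂ)} := by
    have hTe : T = S * (S * B) := by rw [hT, ← hSsq, mul_assoc]
    intro z hz
    rw [hTe] at hz
    rw [spectrum.nonzero_mul_comm] at hz
    have : z ∈ spectrum ℂ ((S * B) * S) := hz.1
    exact hSBS.mem_spectrum_eq_re this
  -- find a nonzero spectral point of T
  obtain ⟨z, hzmem, hznorm⟩ := spectrum.exists_nnnorm_eq_spectralRadius (a := T)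
  have hz0 : z ≠ 0 := by
    intro h
    rw [h] at hznorm
    rw [IsStarNormal.spectralRadius_eq_nnnorm T] at hznorm
    simp only [nnnorm_zero, ENNReal.coe_zero] at hznorm
    exact hne (by simpa [hT] using (nnnorm_eq_zero.mp (ENNReal.coe_injective hznorm.symm)).symm ▸
      (nnnorm_eq_zero.mp (ENNReal.coe_injective hznorm.symm)))
  have hzre : z = (z.re : ℂ) := hspec ⟨hzmem, hz0⟩
  -- z = μ * w with w real in spectrum of T'
  have hμ0 : μ ≠ 0 := Complex.exp_ne_zero _
  have hTT' : T = μ • T' := by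
    rw [hT', smul_smul, hμc, one_smul]
  have hzmem' : z ∈ spectrum ℂ (μ • T') := hTT' ▸ hzmem
  set μu : ℂˣ := Units.mk0 μ hμ0 with hμu
  set w : ℂ := μ⁻¹ * z with hw
  have hwmem : w ∈ spectrum ℂ T' := by
    have h2 : μu • w ∈ spectrum ℂ (μu • T') := by
      show μ • w ∈ spectrum ℂ (μ • T')
      rw [hw, smul_eq_mul, ← mul_assoc, mul_inv_cancel₀ hμ0, one_mul]
      exact hzmem'
    exact spectrum.smul_mem_smul_iff.mp h2
  have hwre : w = (w.re : ℂ) := hT'sa.mem_spectrum_eq_re hwmem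
  have hwzeq : z = μ * w := by
    rw [hw, ← mul_assoc, mul_inv_cancel₀ hμ0, one_mul]
  have hw0 : w ≠ 0 := by
    intro h
    exact hz0 (by rw [hwzeq, h, mul_zero])
  -- μ is real
  have hμre : conj μ = μ := by
    have : μ = z / w := by
      field_simp [hwzeq]
      exact hwzeq.symm
    rw [this, hzre, hwre]
    simp [map_div₀, Complex.conj_ofReal]
  -- conclude
  calc l = μ * μ := hμ2.symm
    _ = μ * conj μ := by rw [hμre]
    _ = 1 := hμc

theorem stmt_2 {H : Type*} [NormedAddCommGroup H] [InnerProductSpace ℂ H] [CompleteSpace H]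
    (A B : H →L[ℂ] H) (l : ℂ)
    (hA : IsSelfAdjoint A) (hB : IsSelfAdjoint B)
    (hcomm : A * B = l • (B * A)) (hne : A * B ≠ 0)
    (hpos : A.IsPositive ∨ (-A).IsPositive ∨ B.IsPositive ∨ (-B).IsPositive) :
    l = 1 := by
  have h1 : B * A = conj l • (A * B) := by
    have := congrArg star hcomm
    rwa [star_mul, hA.star_eq, hB.star_eq, star_smul, star_mul, hA.star_eq, hB.star_eq,
      RCLike.star_def] at this
  have hne' : B * A ≠ 0 := by
    intro h
    rw [h, smul_zero] at hcomm
    exact hne hcomm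
  rcases hpos with h | h | h | h
  · exact key_pos A B l hA hB hcomm hne h
  · refine key_pos (-A) B l hA.neg hB ?_ ?_ h
    · rw [neg_mul, hcomm, mul_neg, smul_neg]
    · simpa using hne
  · have := key_pos B A (conj l) hB hA h1 hne' h
    have : conj (conj l) = conj (1 : ℂ) := congrArg conj this
    simpa using this
  · have hc : (-B) * A = conj l • (A * (-B)) := by
      rw [neg_mul, h1, mul_neg, smul_neg]
    have := key_pos (-B) A (conj l) hB.neg hA hc (by simpa using hne') h
    have : conj (conj l) = conj (1 : ℂ) := congrArg conj this
    simpa using this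
end

section
/- Let A and B be bounded self-adjoint operators on a complex Hilbert space H and let λ be a complex number such that AB = λBA and AB ≠ 0. Then λ = 1 or λ = −1. -/
open scoped ComplexConjugate Pointwise

theorem stmt_3 {H : Type*} [NormedAddCommGroup H] [InnerProductSpace ℂ H] [CompleteSpace H]
    (A B : H →L[ℂ] H) (l : ℂ)
    (hA : IsSelfAdjoint A) (hB : IsSelfAdjoint B)
    (hcomm : A * B = l • (B * A)) (hne : A * B ≠ 0) :
    l = 1 ∨ l = -1 := by
  set C : H →L[ℂ] H := A * B with hC
  have hstar : star C = conj l • C := by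
    have h := congrArg star hcomm
    simp only [star_mul, hA.star_eq, hB.star_eq, star_smul, Complex.star_def] at h
    exact h
  have hBA : B * A = conj l • C := by
    rw [← hstar, hC, star_mul, hA.star_eq, hB.star_eq]
  have hmod : l * conj l = 1 := by
    have h1 : C = (l * conj l) • C := by
      conv_lhs => rw [hcomm, hBA]
      rw [smul_smul]
    have h2 : (l * conj l - 1) • C = 0 := by
      rw [sub_smul, one_smul, ← h1, sub_self]
    rcases smul_eq_zero.mp h2 with h | h
    · exact sub_eq_zero.mp h
    · exact absurd h hne
  have hl0 : l ≠ 0 := by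
    intro h; rw [h, zero_mul] at hmod; exact zero_ne_one hmod
  haveI : Nontrivial (H →L[ℂ] H) := nontrivial_of_ne _ _ hne
  have hnormal : IsStarNormal C := ⟨by
    rw [Commute, SemiconjBy, hstar, smul_mul_assoc, mul_smul_comm]⟩
  -- key claim
  have key : ∀ mu ∈ spectrum ℂ C, ∃ t : ℝ, 0 ≤ t ∧ mu ^ 2 = l * t := by
    intro mu hmu
    have hC2 : C ^ 2 = l • (star C * C) := by
      rw [hstar, smul_mul_assoc, smul_smul, hmod, one_smul, sq]
    have h2 : mu ^ 2 ∈ spectrum ℂ (C ^ 2) := by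
      rw [spectrum.map_pow]; exact ⟨mu, hmu, rfl⟩
    rw [hC2] at h2
    rw [spectrum.smul_eq_smul l (star C * C) (spectrum.nonempty _)] at h2
    obtain ⟨z, hz, hzz⟩ := h2
    have hre : z = (z.re : ℂ) := (IsSelfAdjoint.star_mul_self C).mem_spectrum_eq_re hz
    have hzR : z.re ∈ spectrum ℝ (star C * C) := by
      rw [← spectrum.algebraMap_mem_iff ℂ]
      simpa [← hre] using hz
    refine ⟨z.re, spectrum_star_mul_self_nonneg z.re hzR, ?_⟩
    rw [← hzz, ← hre]; simp [Units.smul_def, smul_eq_mul, mul_comm]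
  -- symmetry of spectrum under conjugation (nonzero part)
  have hconjmem : ∀ mu ∈ spectrum ℂ C, mu ≠ 0 → conj mu ∈ spectrum ℂ C := by
    intro mu hmu hmu0
    have hswap := spectrum.nonzero_mul_comm (𝕜 := ℂ) A B
    have hBAspec : spectrum ℂ (B * A) = conj l • spectrum ℂ C := by
      rw [hBA]
      exact spectrum.smul_eq_smul (conj l) C (spectrum.nonempty _)
    have hstarSpec : spectrum ℂ (star C) = conj l • spectrum ℂ C := by
      rw [hstar]
      exact spectrum.smul_eq_smul (conj l) C (spectrum.nonempty _)
    have hms : spectrum ℂ (star C) = star (spectrum ℂ C) := spectrum.map_star C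
    -- so star (spectrum C) \ {0} = spectrum C \ {0}
    have hkey : star (spectrum ℂ C) \ {0} = spectrum ℂ C \ {0} := by
      rw [← hms, hstarSpec, ← hBAspec, ← hswap, hC]
    have : mu ∈ star (spectrum ℂ C) := by
      have : mu ∈ star (spectrum ℂ C) \ {0} := by
        rw [hkey]; exact ⟨hmu, hmu0⟩
      exact this.1
    simpa [Set.mem_star, Complex.star_def] using this
  -- pick mu of maximal modulus
  obtain ⟨mu, hmu, hmur⟩ := spectrum.exists_nnnorm_eq_spectralRadius (a := C)
  have hmu0 : mu ≠ 0 := by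
    intro h
    rw [h, IsStarNormal.spectralRadius_eq_nnnorm C] at hmur
    simp only [nnnorm_zero, ENNReal.coe_zero] at hmur
    exact hne (by simpa using (nnnorm_eq_zero.mp (by exact_mod_cast hmur.symm)))
  obtain ⟨t, ht0, htt⟩ := key mu hmu
  obtain ⟨s, hs0, hss⟩ := key (conj mu) (hconjmem mu hmu hmu0)
  have hnsq : Complex.normSq l = 1 := by
    have h := hmod
    rw [Complex.mul_conj] at h
    exact_mod_cast h
  have habsl : ‖l‖ = 1 := by
    have h := Complex.sq_norm l
    rw [hnsq] at h
    nlinarith [norm_nonneg l]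
  have hts : t = s := by
    have h1 : ‖mu ^ 2‖ = t := by
      rw [htt]; simp [map_mul, habsl, abs_of_nonneg ht0]
    have h2 : ‖mu ^ 2‖ = s := by
      have : ‖(conj mu) ^ 2‖ = s := by
        rw [hss]; simp [map_mul, habsl, abs_of_nonneg hs0]
      simpa [map_pow, Complex.norm_conj] using this
    rw [← h1, h2]
  have htpos : 0 < t := by
    rcases ht0.lt_or_eq with h | h
    · exact h
    · exfalso; apply hmu0
      have : mu ^ 2 = 0 := by rw [htt, ← h]; simp
      exact pow_eq_zero_iff (n := 2) (by norm_num) |>.mp this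
  have hlreal : conj l = l := by
    have h1 : conj (mu ^ 2) = conj l * t := by
      rw [htt]; simp
    have h2 : conj (mu ^ 2) = l * s := by
      rw [← hss]; simp
    have := h1.symm.trans h2
    rw [← hts] at this
    rw [mul_eq_mul_right_iff] at this
    rcases this with h | h
    · exact h
    · exact absurd (by exact_mod_cast h) htpos.ne'
  have : l * l = 1 := by rw [← hmod, hlreal]
  exact mul_self_eq_one_iff.mp this
end

section
/- Let A and B be bounded normal operators on a complex Hilbert space H and let U be a unitary operator on H such that AB = UBA. If U commutes with B (i.e. UB = BU), then both UB and AB are normal operators. -/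
open NormedSpace Nat

section FP

variable {X : Type*} [NormedRing X] [StarRing X] [CStarRing X] [NormedAlgebra ℂ X]
  [CompleteSpace X] [StarModule ℂ X]

private lemma skew_exp_star_mul (S : X) (hS : star S = -S) :
    star (exp S) * exp S = 1 ∧ exp S * star (exp S) = 1 := by
  letI : NormedAlgebra ℚ X := NormedAlgebra.restrictScalars ℚ ℂ X
  have h1 : star (exp S) = exp (-S) := by rw [star_exp, hS]
  constructor
  · rw [h1, ← exp_add_of_commute ((Commute.refl S).neg_left), neg_add_cancel, exp_zero]
  · rw [h1, ← exp_add_of_commute ((Commute.refl S).neg_right), add_neg_cancel, exp_zero]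

private lemma norm_unit_mul (u t : X) (h : star u * u = 1) : ‖u * t‖ = ‖t‖ := by
  have h1 : ‖star (u * t) * (u * t)‖ = ‖u * t‖ * ‖u * t‖ := CStarRing.norm_star_mul_self
  have h2 : star (u * t) * (u * t) = star t * t := by
    rw [star_mul, mul_assoc, ← mul_assoc (star u), h, one_mul]
  have h3 : ‖star t * t‖ = ‖t‖ * ‖t‖ := CStarRing.norm_star_mul_self
  have h4 : ‖u * t‖ * ‖u * t‖ = ‖t‖ * ‖t‖ := by rw [← h1, h2, h3]
  have := congrArg Real.sqrt h4
  rwa [Real.sqrt_mul_self (norm_nonneg _), Real.sqrt_mul_self (norm_nonneg _)] at this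

private lemma norm_mul_unit (u t : X) (h : u * star u = 1) : ‖t * u‖ = ‖t‖ := by
  have h1 : ‖(t * u) * star (t * u)‖ = ‖t * u‖ * ‖t * u‖ := CStarRing.norm_self_mul_star
  have h2 : (t * u) * star (t * u) = t * star t := by
    rw [star_mul, mul_assoc, ← mul_assoc u, h, one_mul]
  have h3 : ‖t * star t‖ = ‖t‖ * ‖t‖ := CStarRing.norm_self_mul_star
  have h4 : ‖t * u‖ * ‖t * u‖ = ‖t‖ * ‖t‖ := by rw [← h1, h2, h3]
  have := congrArg Real.sqrt h4
  rwa [Real.sqrt_mul_self (norm_nonneg _), Real.sqrt_mul_self (norm_nonneg _)] at this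

private lemma exp_intertwine {M N T : X} (h : M * T = T * N) (z : ℂ) :
    exp (z • M) * T = T * exp (z • N) := by
  have hn : ∀ n : ℕ, M ^ n * T = T * N ^ n := by
    intro n
    induction n with
    | zero => simp
    | succ n ih =>
      rw [pow_succ, pow_succ, mul_assoc, h, ← mul_assoc, ih, mul_assoc]
  calc exp (z • M) * T = ∑' n : ℕ, (((n ! : ℂ))⁻¹ • (z • M) ^ n) * T := by
        rw [exp_eq_tsum ℂ, (expSeries_summable' (𝕂 := ℂ) (z • M)).tsum_mul_right T]
    _ = ∑' n : ℕ, T * (((n ! : ℂ))⁻¹ • (z • N) ^ n) := by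
        refine tsum_congr fun n => ?_
        simp only [smul_pow, smul_mul_assoc, mul_smul_comm, hn n]
    _ = T * exp (z • N) := by
        rw [exp_eq_tsum ℂ, (expSeries_summable' (𝕂 := ℂ) (z • N)).tsum_mul_left T]

/-- The Fuglede–Putnam theorem. -/
private lemma fuglede_putnam {M N T : X} (hM : star M * M = M * star M)
    (hN : star N * N = N * star N) (h : M * T = T * N) : star M * T = T * star N := by
  set f : ℂ → X := fun z => exp (z • star M) * T * exp (z • (-star N)) with hf
  have hdiff : Differentiable ℂ f := by
    have d1 : Differentiable ℂ (fun z : ℂ => exp (z • star M)) :=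
      fun z => (hasDerivAt_exp_smul_const (star M) z).differentiableAt
    have d2 : Differentiable ℂ (fun z : ℂ => exp (z • (-star N))) :=
      fun z => (hasDerivAt_exp_smul_const (-star N) z).differentiableAt
    exact (d1.mul_const T).mul d2
  have hMc : Commute (star M) M := hM
  have hNc : Commute (star N) N := hN
  -- the rewriting of f z as unitary * T * unitary
  have hbound : ∀ z : ℂ, ‖f z‖ = ‖T‖ := by
    intro z
    set w := (starRingEnd ℂ) z with hw
    have hT : exp (w • (-M)) * T * exp (w • N) = T := by
      letI : NormedAlgebra ℚ X := NormedAlgebra.restrictScalars ℚ ℂ X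
      have h' : (-M) * T = T * (-N) := by rw [neg_mul, mul_neg, h]
      rw [exp_intertwine h' w, mul_assoc, ← exp_add_of_commute ((Commute.refl N).neg_left.smul_left w |>.smul_right w)]
      rw [← smul_add, neg_add_cancel, smul_zero, exp_zero, mul_one]
    have hc1 : Commute (z • star M) (w • (-M)) :=
      ((hMc.neg_right).smul_left z).smul_right w
    have hc2 : Commute (w • N) (z • (-star N)) :=
      ((hNc.neg_left.symm).smul_left w).smul_right z
    have hfz : f z = exp (z • star M + w • (-M)) * T * exp (w • N + z • (-star N)) := by
      letI : NormedAlgebra ℚ X := NormedAlgebra.restrictScalars ℚ ℂ X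
      rw [exp_add_of_commute hc1, exp_add_of_commute hc2, hf]
      simp only []
      conv_lhs => rw [← hT]
      simp only [mul_assoc]
    have hs1 : star (z • star M + w • (-M)) = -(z • star M + w • (-M)) := by
      simp [star_smul, star_star, hw, smul_neg]
    have hs2 : star (w • N + z • (-star N)) = -(w • N + z • (-star N)) := by
      simp [star_smul, star_star, hw, smul_neg]
    rw [hfz, norm_mul_unit _ _ (skew_exp_star_mul _ hs2).2,
      norm_unit_mul _ _ (skew_exp_star_mul _ hs1).1]
  have hb : Bornology.IsBounded (Set.range f) := by
    rw [isBounded_iff_forall_norm_le]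
    exact ⟨‖T‖, by rintro x ⟨z, rfl⟩; exact (hbound z).le⟩
  have hconst : ∀ z : ℂ, f z = f 0 := fun z => hdiff.apply_eq_apply_of_bounded hb z 0
  have hf0 : f 0 = T := by simp [hf]
  have g : ∀ z : ℂ, exp (z • star M) * T = T * exp (z • star N) := by
    intro z
    have h1 : f z = T := (hconst z).trans hf0
    have h2 : exp (z • (-star N)) * exp (z • star N) = 1 := by
      letI : NormedAlgebra ℚ X := NormedAlgebra.restrictScalars ℚ ℂ X
      rw [← exp_add_of_commute (((Commute.refl (star N)).neg_left).smul_left z |>.smul_right z),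
        ← smul_add, neg_add_cancel, smul_zero, exp_zero]
    calc exp (z • star M) * T
        = f z * exp (z • star N) := by
          rw [hf]; simp only [mul_assoc, h2, mul_one]
      _ = T * exp (z • star N) := by rw [h1]
  have h1 : HasDerivAt (fun z : ℂ => exp (z • star M) * T)
      (exp ((0:ℂ) • star M) * star M * T) 0 :=
    (hasDerivAt_exp_smul_const (star M) 0).mul_const T
  have h2 : HasDerivAt (fun z : ℂ => exp (z • star M) * T)
      (T * (exp ((0:ℂ) • star N) * star N)) 0 := by
    refine ((hasDerivAt_exp_smul_const (star N) 0).const_mul T).congr_of_eventuallyEq ?_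
    exact Filter.Eventually.of_forall g
  have := h1.unique h2
  simpa [zero_smul, exp_zero] using this

end FP

theorem stmt_4 {H : Type*} [NormedAddCommGroup H] [InnerProductSpace ℂ H] [CompleteSpace H]
    (A B U : H →L[ℂ] H)
    (hA : ContinuousLinearMap.adjoint A * A = A * ContinuousLinearMap.adjoint A)
    (hB : ContinuousLinearMap.adjoint B * B = B * ContinuousLinearMap.adjoint B)
    (hU : ContinuousLinearMap.adjoint U * U = 1 ∧ U * ContinuousLinearMap.adjoint U = 1)
    (hcomm : A * B = U * (B * A)) (hUB : U * B = B * U) :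
    (ContinuousLinearMap.adjoint (U * B) * (U * B) = (U * B) * ContinuousLinearMap.adjoint (U * B)) ∧
    (ContinuousLinearMap.adjoint (A * B) * (A * B) = (A * B) * ContinuousLinearMap.adjoint (A * B)) := by
  simp only [← ContinuousLinearMap.star_eq_adjoint] at *
  obtain ⟨hU1, hU2⟩ := hU
  -- Fuglede: U commutes with star B
  have h1 : star B * U = U * star B := fuglede_putnam hB hB hUB.symm
  -- U * B is normal
  have hN : star (U * B) * (U * B) = (U * B) * star (U * B) := by
    have lhs : star (U * B) * (U * B) = star B * B := by
      rw [star_mul, mul_assoc, ← mul_assoc (star U), hU1, one_mul]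
    have rhs : (U * B) * star (U * B) = star B * B := by
      rw [star_mul]
      calc U * B * (star B * star U) = U * (B * star B) * star U := by
            simp only [mul_assoc]
        _ = U * (star B * B) * star U := by rw [hB]
        _ = (U * star B) * B * star U := by simp only [mul_assoc]
        _ = (star B * U) * B * star U := by rw [h1]
        _ = star B * (U * B) * star U := by simp only [mul_assoc]
        _ = star B * (B * U) * star U := by rw [hUB]
        _ = star B * B * (U * star U) := by simp only [mul_assoc]
        _ = star B * B := by rw [hU2, mul_one]
    rw [lhs, rhs]
  refine ⟨hN, ?_⟩
  -- Fuglede–Putnam applied to (U*B) * A = A * B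
  have h2 : star (U * B) * A = A * star B := by
    refine fuglede_putnam hN hB ?_
    rw [mul_assoc, ← hcomm]
  have h3 : A * star B = star B * star U * A := by rw [← h2, star_mul]
  have h4 : star A * (U * B) = B * star A := by
    have := congrArg star h2
    simpa only [star_mul, star_star, mul_assoc] using this
  have lhs : star (A * B) * (A * B) = star B * (B * (A * star A)) := by
    rw [star_mul]
    calc star B * star A * (A * B)
        = star B * star A * (U * (B * A)) := by rw [hcomm]
      _ = star B * ((star A * (U * B)) * A) := by simp only [mul_assoc]
      _ = star B * ((B * star A) * A) := by rw [h4]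
      _ = star B * (B * (star A * A)) := by simp only [mul_assoc]
      _ = star B * (B * (A * star A)) := by rw [hA]
  have rhs : (A * B) * star (A * B) = star B * (B * (A * star A)) := by
    rw [star_mul]
    calc A * B * (star B * star A)
        = A * (B * star B) * star A := by simp only [mul_assoc]
      _ = A * (star B * B) * star A := by rw [hB]
      _ = (A * star B) * (B * star A) := by simp only [mul_assoc]
      _ = (star B * star U * A) * (B * star A) := by rw [h3]
      _ = star B * (star U * (A * B) * star A) := by simp only [mul_assoc]
      _ = star B * (star U * (U * (B * A)) * star A) := by rw [hcomm]
      _ = star B * ((star U * U) * (B * (A * star A))) := by simp only [mul_assoc]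
      _ = star B * (B * (A * star A)) := by rw [hU1, one_mul]
  rw [lhs, rhs]
end

section
/- Let A be a densely defined (possibly unbounded) self-adjoint operator on a complex Hilbert space H and let B be a bounded self-adjoint operator on H. Assume BA ⊆ λAB (i.e. λAB extends BA) for some complex number λ with AB ≠ 0. Then AB is a normal operator, i.e. AB is closed, densely defined, and (AB)*(AB) = (AB)(AB)* (with equality of domains). -/
/-- Composition of two partially defined linear maps, with domain
`{x ∈ D(B) : B x ∈ D(A)}`. -/
noncomputable def LinearPMap.pcomp {R E F G : Type*} [Ring R] [AddCommGroup E] [Module R E]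
    [AddCommGroup F] [Module R F] [AddCommGroup G] [Module R G]
    (A : F →ₗ.[R] G) (B : E →ₗ.[R] F) : E →ₗ.[R] G :=
  A.comp (B.domRestrict ((A.domain.comap B.toFun).map B.domain.subtype))
    (fun x => by
      obtain ⟨y, hy, hyx⟩ := Submodule.mem_map.mp x.2.1
      rwa [LinearPMap.domRestrict_apply hyx.symm])

set_option linter.unusedSectionVars false
set_option maxHeartbeats 1000000

section stmt7aux
open Topology Filter
variable {H : Type*} [NormedAddCommGroup H] [InnerProductSpace ℂ H] [CompleteSpace H]
local notation "⟪" x ", " y "⟫" => @inner ℂ _ _ x y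

theorem pmap_eq_apply {f g : H →ₗ.[ℂ] H} (h : f = g) (x : f.domain) (y : g.domain)
    (hxy : (x:H) = y) : f x = g y := by
  subst h; congr 1; exact Subtype.ext hxy

theorem pmap_apply_congr {f : H →ₗ.[ℂ] H} (x y : f.domain) (h : (x:H) = y) : f x = f y := by
  congr 1; exact Subtype.ext h

theorem pcomp_domain (A Bp : H →ₗ.[ℂ] H) :
    (A.pcomp Bp).domain
      = ((A.domain.comap Bp.toFun).map Bp.domain.subtype) ⊓ Bp.domain := rfl

theorem pcomp_mem_domain {A Bp : H →ₗ.[ℂ] H} {x : H} :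
    x ∈ (A.pcomp Bp).domain ↔ ∃ hx : x ∈ Bp.domain, Bp ⟨x, hx⟩ ∈ A.domain := by
  rw [pcomp_domain, Submodule.mem_inf]
  constructor
  · rintro ⟨hS, hB⟩
    obtain ⟨y, hy, hyx⟩ := Submodule.mem_map.mp hS
    refine ⟨hB, ?_⟩
    have : Bp ⟨x, hB⟩ = Bp y := pmap_apply_congr _ _ (by simpa using hyx.symm)
    rw [this]
    simpa [LinearPMap.toFun_eq_coe] using hy
  · rintro ⟨hx, hAx⟩
    refine ⟨Submodule.mem_map.mpr ⟨⟨x, hx⟩, ?_, rfl⟩, hx⟩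
    simpa [LinearPMap.toFun_eq_coe] using hAx

theorem pcomp_apply {A Bp : H →ₗ.[ℂ] H} (x : (A.pcomp Bp).domain) (h1 : (x:H) ∈ Bp.domain)
    (h2 : Bp ⟨x, h1⟩ ∈ A.domain) : (A.pcomp Bp) x = A ⟨Bp ⟨x, h1⟩, h2⟩ := by
  show A.toFun _ = _
  rw [LinearPMap.toFun_eq_coe]
  congr 1

variable {A : H →ₗ.[ℂ] H} (hA : A.adjoint = A) (hd : Dense (A.domain : Set H))

include hA hd in
theorem symm_selfadj (x y : A.domain) : ⟪A x, (y:H)⟫ = ⟪(x:H), A y⟫ := by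
  have h := LinearPMap.adjoint_isFormalAdjoint hd; rw [hA] at h; exact h x y

include hA hd in
theorem selfadj_isClosed : A.IsClosed := by
  have hgr : (A.graph : Set (H × H))
      = ⋂ (x : A.domain), {p : H × H | ⟪p.2, (x:H)⟫ = ⟪p.1, A x⟫} := by
    ext p
    simp only [Set.mem_iInter, Set.mem_setOf_eq, SetLike.mem_coe]
    constructor
    · intro hp x
      obtain ⟨y, hy1, hy2⟩ := (A.mem_graph_iff).mp hp
      rw [← hy1, ← hy2]
      exact symm_selfadj hA hd y x
    · intro hp
      have hmem : p.1 ∈ A.adjoint.domain :=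
        LinearPMap.mem_adjoint_domain_of_exists _ ⟨p.2, fun x => hp x⟩
      have hval : A.adjoint ⟨p.1, hmem⟩ = p.2 :=
        LinearPMap.adjoint_apply_eq hd ⟨p.1, hmem⟩ (fun x => hp x)
      have hmem' : p.1 ∈ A.domain := hA ▸ hmem
      have hval' : A ⟨p.1, hmem'⟩ = p.2 := by
        rw [← hval]; exact (pmap_eq_apply hA ⟨p.1, hmem⟩ ⟨p.1, hmem'⟩ rfl).symm
      exact (A.mem_graph_iff).mpr ⟨⟨p.1, hmem'⟩, rfl, hval'⟩
  rw [LinearPMap.IsClosed, hgr]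
  exact isClosed_iInter fun x =>
    isClosed_eq (continuous_snd.inner continuous_const) (continuous_fst.inner continuous_const)

include hd in
theorem dense_inner_zero {w : H} (h : ∀ x : A.domain, ⟪w, (x:H)⟫ = 0) : w = 0 := by
  have hfg : (fun u : H => (⟪w, u⟫ : ℂ)) = fun _ => (0:ℂ) :=
    Continuous.ext_on hd (continuous_const.inner continuous_id) continuous_const
      (fun u hu => h ⟨u, hu⟩)
  have := congrFun hfg w
  simpa [inner_self_eq_zero] using this

include hA hd in
theorem kill_lemma (B : H →L[ℂ] H) (hBs : ∀ u v : H, ⟪B u, v⟫ = ⟪u, B v⟫)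
    (h0 : ∀ x : A.domain, B (A x) = 0) :
    ∀ u : H, ∃ hu : B u ∈ A.domain, A ⟨B u, hu⟩ = 0 := by
  intro u
  have hmem : B u ∈ A.adjoint.domain := by
    apply LinearPMap.mem_adjoint_domain_of_exists
    refine ⟨0, fun x => ?_⟩
    rw [hBs u (A x), h0 x]
    simp
  have hval : A.adjoint ⟨B u, hmem⟩ = 0 := by
    apply LinearPMap.adjoint_apply_eq hd
    intro x
    rw [hBs u (A x), h0 x]
    simp
  have hmem' : B u ∈ A.domain := hA ▸ hmem
  refine ⟨hmem', ?_⟩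
  rw [← hval]
  exact (pmap_eq_apply hA ⟨B u, hmem⟩ ⟨B u, hmem'⟩ rfl).symm

include hA hd in
theorem selfadj_inner_real (x : A.domain) : (⟪A x, (x:H)⟫).im = 0 := by
  have h1 : ⟪A x, (x:H)⟫ = ⟪(x:H), A x⟫ := symm_selfadj hA hd x x
  have h2 : ⟪(x:H), A x⟫ = (starRingEnd ℂ) ⟪A x, (x:H)⟫ := (inner_conj_symm _ _).symm
  have h3 := congrArg Complex.im (h1.trans h2)
  rw [Complex.conj_im] at h3
  linarith

include hA hd in
theorem selfadj_lower (z : ℂ) (x : A.domain) :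
    |z.im| * ‖(x:H)‖ ≤ ‖A x - z • (x:H)‖ := by
  set t : ℂ := ⟪A x, (x:H)⟫ with ht
  have htim : t.im = 0 := selfadj_inner_real hA hd x
  have key : ‖A x - z • (x:H)‖^2 = ‖A x - ((z.re : ℂ)) • (x:H)‖^2 + z.im^2 * ‖(x:H)‖^2 := by
    have e1 : ‖A x - z • (x:H)‖^2
        = ‖A x‖^2 - 2 * (z * t).re + ‖z‖^2 * ‖(x:H)‖^2 := by
      rw [@norm_sub_sq ℂ]
      rw [inner_smul_right]
      rw [norm_smul]
      simp only [RCLike.re_to_complex]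
      ring
    have e2 : ‖A x - ((z.re:ℂ)) • (x:H)‖^2
        = ‖A x‖^2 - 2 * (((z.re:ℂ)) * t).re + ‖(z.re:ℂ)‖^2 * ‖(x:H)‖^2 := by
      rw [@norm_sub_sq ℂ]
      rw [inner_smul_right]
      rw [norm_smul]
      simp only [RCLike.re_to_complex]
      ring
    rw [e1, e2]
    have h3 : (z * t).re = z.re * t.re := by
      rw [Complex.mul_re, htim]; ring
    have h4 : (((z.re:ℂ)) * t).re = z.re * t.re := by
      rw [Complex.mul_re, htim]; simp
    have h5 : ‖z‖^2 = z.re^2 + z.im^2 := by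
      rw [Complex.sq_norm, Complex.normSq_apply]; ring
    have h6 : ‖((z.re:ℂ))‖^2 = z.re^2 := by
      rw [Complex.sq_norm, Complex.normSq_apply]; simp; ring
    rw [h3, h4, h5, h6]; ring
  have hsq : (|z.im| * ‖(x:H)‖)^2 ≤ ‖A x - z • (x:H)‖^2 := by
    rw [key, mul_pow, sq_abs]
    nlinarith [sq_nonneg (‖A x - ((z.re:ℂ)) • (x:H)‖)]
  exact (pow_le_pow_iff_left₀ (by positivity) (norm_nonneg _) (by norm_num)).mp hsq

include hA hd in
theorem selfadj_exists_resolvent (z : ℂ) (hz : z.im ≠ 0) :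
    ∃ R : H →L[ℂ] H, (∀ y : H, R y ∈ A.domain) ∧
      (∀ (y : H) (h : R y ∈ A.domain), A ⟨R y, h⟩ = y + z • R y) ∧
      (∀ y : H, ‖R y‖ ≤ |z.im|⁻¹ * ‖y‖) ∧
      (∀ x : A.domain, R ((A x : H) - z • (x : H)) = (x : H)) := by
  classical
  set f : A.domain →ₗ[ℂ] H := A.toFun - z • A.domain.subtype with hf
  have hfapp : ∀ x : A.domain, f x = A x - z • (x:H) := fun x => rfl
  have hlow : ∀ x : A.domain, |z.im| * ‖(x:H)‖ ≤ ‖f x‖ := by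
    intro x; rw [hfapp]; exact selfadj_lower hA hd z x
  have hzim : (0:ℝ) < |z.im| := abs_pos.mpr hz
  have hinj : Function.Injective f := by
    intro a b hab
    have h0 : f (a - b) = 0 := by rw [map_sub, hab, sub_self]
    have hle := hlow (a - b)
    rw [h0, norm_zero] at hle
    have hn : ‖((a - b : A.domain) : H)‖ = 0 := by
      nlinarith [norm_nonneg ((a - b : A.domain) : H)]
    have h1 : ((a - b : A.domain) : H) = 0 := norm_eq_zero.mp hn
    have h2 : (a:H) - (b:H) = 0 := by simpa using h1
    exact Subtype.ext (sub_eq_zero.mp h2)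
  have hAclosed := selfadj_isClosed hA hd
  have hclosed : IsClosed ((LinearMap.range f : Submodule ℂ H) : Set H) := by
    rw [← isSeqClosed_iff_isClosed]
    intro g y hg hgy
    have hg' : ∀ n, ∃ a : A.domain, f a = g n := fun n => (LinearMap.mem_range).mp (hg n)
    choose xs hxs using hg'
    have hcau : CauchySeq (fun n => ((xs n : H))) := by
      rw [Metric.cauchySeq_iff]
      intro ε hε
      obtain ⟨N, hN⟩ := Metric.cauchySeq_iff.mp hgy.cauchySeq (|z.im| * ε)
        (by positivity)
      refine ⟨N, fun m hm n hn => ?_⟩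
      have h1 := hlow (xs m - xs n)
      have h2 : f (xs m - xs n) = g m - g n := by rw [map_sub, hxs, hxs]
      rw [h2] at h1
      have h3 : dist (g m) (g n) < |z.im| * ε := hN m hm n hn
      rw [dist_eq_norm] at h3 ⊢
      have h4 : ‖((xs m : H)) - ((xs n : H))‖ = ‖((xs m - xs n : A.domain) : H)‖ := by
        simp
      rw [h4]
      nlinarith [norm_nonneg ((xs m - xs n : A.domain) : H)]
    obtain ⟨x, hx⟩ := cauchySeq_tendsto_of_complete hcau
    have hAv : ∀ n, A (xs n) = g n + z • ((xs n : H)) := by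
      intro n
      have := hxs n
      rw [hfapp] at this
      linear_combination (norm := module) this
    have hAtend : Filter.Tendsto (fun n => A (xs n)) Filter.atTop (𝓝 (y + z • x)) := by
      simp only [hAv]
      exact hgy.add (hx.const_smul z)
    have hmem : (x, y + z • x) ∈ A.graph := by
      refine hAclosed.mem_of_tendsto (hx.prodMk_nhds hAtend)
        (Filter.Eventually.of_forall fun n => ?_)
      exact A.mem_graph (xs n)
    obtain ⟨v, hv1, hv2⟩ := (A.mem_graph_iff).mp hmem
    refine (LinearMap.mem_range).mpr ⟨v, ?_⟩
    rw [hfapp, hv2, hv1]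
    module
  have horth : (LinearMap.range f)ᗮ = ⊥ := by
    rw [Submodule.eq_bot_iff]
    intro y hy
    have hy' : ∀ x : A.domain, ⟪(f x : H), y⟫ = 0 := fun x =>
      hy (f x) (LinearMap.mem_range_self f x)
    have hkey : ∀ x : A.domain, ⟪(starRingEnd ℂ z) • y, (x:H)⟫ = ⟪y, A x⟫ := by
      intro x
      have h1 := hy' x
      rw [hfapp, inner_sub_left, sub_eq_zero, inner_smul_left] at h1
      have h2 := congrArg (starRingEnd ℂ) h1
      rw [map_mul, inner_conj_symm, inner_conj_symm] at h2
      rw [inner_smul_left]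
      simpa using h2.symm
    have hmem : y ∈ A.adjoint.domain :=
      LinearPMap.mem_adjoint_domain_of_exists _ ⟨(starRingEnd ℂ z) • y, hkey⟩
    have hval : A.adjoint ⟨y, hmem⟩ = (starRingEnd ℂ z) • y :=
      LinearPMap.adjoint_apply_eq hd ⟨y, hmem⟩ hkey
    have hmem' : y ∈ A.domain := hA ▸ hmem
    have hval' : A ⟨y, hmem'⟩ = (starRingEnd ℂ z) • y := by
      rw [← hval]; exact (pmap_eq_apply hA ⟨y, hmem⟩ ⟨y, hmem'⟩ rfl).symm
    have him := selfadj_inner_real hA hd ⟨y, hmem'⟩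
    rw [hval', inner_smul_left] at him
    simp only [RingHomCompTriple.comp_apply, RingHom.id_apply] at him
    rw [inner_self_eq_norm_sq_to_K] at him
    have h' : (z * (‖y‖:ℂ)^2).im = z.im * ‖y‖^2 := by
      have hcast : ((‖y‖:ℂ))^2 = ((‖y‖^2:ℝ):ℂ) := by push_cast; ring
      rw [hcast, Complex.mul_im, Complex.ofReal_re, Complex.ofReal_im]
      ring
    have him2 : z.im * ‖y‖^2 = 0 := by
      rw [← h']; exact him
    have hyn : ‖y‖ = 0 := by
      rcases mul_eq_zero.mp him2 with h | h
      · exact absurd h hz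
      · nlinarith [norm_nonneg y]
    exact norm_eq_zero.mp hyn
  haveI : CompleteSpace (LinearMap.range f : Submodule ℂ H) := hclosed.completeSpace_coe
  have htop : LinearMap.range f = ⊤ := by
    have h1 := Submodule.orthogonal_orthogonal (LinearMap.range f)
    rw [horth] at h1
    rw [← h1, Submodule.bot_orthogonal_eq_top]
  have hsurj : Function.Surjective f := LinearMap.range_eq_top.mp htop
  set e := LinearEquiv.ofBijective f ⟨hinj, hsurj⟩ with he
  have heapp : ∀ v : A.domain, e v = f v := fun v => rfl
  set R0 : H →ₗ[ℂ] H := (A.domain.subtype).comp (e.symm : H →ₗ[ℂ] A.domain) with hR0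
  have hR0app : ∀ y : H, R0 y = ((e.symm y : A.domain) : H) := fun y => rfl
  have hfsymm : ∀ y : H, f (e.symm y) = y := by
    intro y
    rw [← heapp]
    exact e.apply_symm_apply y
  have hbound : ∀ y : H, ‖R0 y‖ ≤ |z.im|⁻¹ * ‖y‖ := by
    intro y
    have h1 := hlow (e.symm y)
    rw [hfsymm] at h1
    rw [hR0app]
    rw [inv_mul_eq_div, le_div_iff₀ hzim]
    linarith
  refine ⟨R0.mkContinuous (|z.im|⁻¹) hbound, ?_, ?_, ?_, ?_⟩
  · intro y
    exact (e.symm y).2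
  · intro y h
    have h1 : (⟨(R0.mkContinuous (|z.im|⁻¹) hbound) y, h⟩ : A.domain) = e.symm y :=
      Subtype.ext rfl
    rw [h1]
    have h2 := hfsymm y
    rw [hfapp] at h2
    have : ((e.symm y : A.domain) : H) = (R0.mkContinuous (|z.im|⁻¹) hbound) y := rfl
    rw [this] at h2
    linear_combination (norm := module) h2
  · exact hbound
  · intro x
    have h1 : (A x : H) - z • (x:H) = f x := (hfapp x).symm
    rw [h1]
    have h2 : e.symm (f x) = x := by
      rw [← heapp]
      exact e.symm_apply_apply x
    show ((e.symm (f x) : A.domain) : H) = (x:H)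
    rw [h2]

include hA hd in
theorem molli_tendsto (R : ℂ → H →L[ℂ] H)
    (hmem : ∀ z : ℂ, z.im ≠ 0 → ∀ y : H, R z y ∈ A.domain)
    (hnorm : ∀ z : ℂ, z.im ≠ 0 → ∀ y : H, ‖R z y‖ ≤ |z.im|⁻¹ * ‖y‖)
    (huniq : ∀ z : ℂ, z.im ≠ 0 → ∀ x : A.domain, R z ((A x : H) - z • (x:H)) = (x:H))
    (d : ℂ) (hdim : d.im ≠ 0) (v : H) :
    Filter.Tendsto (fun n : ℕ => (-(((n:ℂ)+1) * d)) • R (((n:ℂ)+1)*d) v)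
      Filter.atTop (𝓝 v) := by
  have hnd : ∀ n : ℕ, ((((n:ℂ)+1))*d).im ≠ 0 := by
    intro n
    have h1 : ((((n:ℂ)+1))*d).im = ((n:ℝ)+1) * d.im := by
      rw [Complex.mul_im]
      simp
    rw [h1]
    positivity
  have habs : ∀ n : ℕ, ‖(((n:ℂ)+1))*d‖ = ((n:ℝ)+1) * ‖d‖ := by
    intro n
    have hcast : ((n:ℂ)+1) = (((n:ℝ)+1 : ℝ) : ℂ) := by push_cast; ring
    rw [norm_mul, hcast, Complex.norm_real, Real.norm_eq_abs, abs_of_pos (by positivity : (0:ℝ) < (n:ℝ)+1)]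
  have him : ∀ n : ℕ, |((((n:ℂ)+1))*d).im| = ((n:ℝ)+1) * |d.im| := by
    intro n
    have h1 : ((((n:ℂ)+1))*d).im = ((n:ℝ)+1) * d.im := by
      rw [Complex.mul_im]; simp
    rw [h1, abs_mul]
    congr 1
    rw [abs_of_pos]
    positivity
  set K : ℝ := ‖d‖ / |d.im| with hK
  have hdimpos : (0:ℝ) < |d.im| := abs_pos.mpr hdim
  have hKpos : 0 < K + 1 := by positivity
  have hbnd : ∀ (n : ℕ) (w : H),
      ‖(-(((n:ℂ)+1) * d)) • R (((n:ℂ)+1)*d) w‖ ≤ K * ‖w‖ := by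
    intro n w
    rw [norm_smul, norm_neg, habs n]
    have h3 := hnorm _ (hnd n) w
    rw [him n] at h3
    calc ((n:ℝ)+1) * ‖d‖ * ‖R (((n:ℂ)+1)*d) w‖
        ≤ ((n:ℝ)+1) * ‖d‖ * ((((n:ℝ)+1) * |d.im|)⁻¹ * ‖w‖) :=
          mul_le_mul_of_nonneg_left h3 (by positivity)
      _ = K * ‖w‖ := by
          rw [hK]
          field_simp
  have hdom : ∀ (n : ℕ) (w : A.domain),
      ‖(-(((n:ℂ)+1) * d)) • R (((n:ℂ)+1)*d) (w:H) - (w:H)‖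
        ≤ (((n:ℝ)+1) * |d.im|)⁻¹ * ‖A w‖ := by
    intro n w
    set z : ℂ := (((n:ℂ)+1))*d with hz
    have hq := huniq z (hnd n) w
    have hRA : R z (A w) = (w:H) + z • R z (w:H) := by
      have h1 : (A w : H) = ((A w : H) - z • (w:H)) + z • (w:H) := by module
      rw [h1, map_add, hq, map_smul]
    have h2 : (-z) • R z (w:H) - (w:H) = -(R z (A w)) := by
      rw [hRA]; module
    rw [h2, norm_neg]
    rw [← him n]
    exact hnorm z (hnd n) (A w)
  rw [Metric.tendsto_atTop]
  intro ε hε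
  have hK0 : (0:ℝ) ≤ K := by positivity
  obtain ⟨w, hwmem, hwd⟩ := hd.exists_dist_lt v (show 0 < ε / (4*(K+1)) by positivity)
  set w' : A.domain := (⟨w, hwmem⟩ : A.domain) with hw'
  set C : ℝ := |d.im|⁻¹ * ‖A w'‖ with hC
  have hC0 : (0:ℝ) ≤ C := by positivity
  obtain ⟨N, hN⟩ := exists_nat_gt (C / (ε/2))
  refine ⟨N, fun n hn => ?_⟩
  have hn1 : (0:ℝ) < (n:ℝ)+1 := by positivity
  have h1 : ‖(-(((n:ℂ)+1) * d)) • R (((n:ℂ)+1)*d) v - (-(((n:ℂ)+1) * d)) • R (((n:ℂ)+1)*d) w‖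
      ≤ K * ‖v - w‖ := by
    have hlin : (-(((n:ℂ)+1) * d)) • R (((n:ℂ)+1)*d) v - (-(((n:ℂ)+1) * d)) • R (((n:ℂ)+1)*d) w
        = (-(((n:ℂ)+1) * d)) • R (((n:ℂ)+1)*d) (v - w) := by
      rw [map_sub, smul_sub]
    rw [hlin]
    exact hbnd n (v - w)
  have h2 : ‖(-(((n:ℂ)+1) * d)) • R (((n:ℂ)+1)*d) w - w‖ ≤ ((n:ℝ)+1)⁻¹ * C := by
    have h2a := hdom n w'
    have h2b : ((((n:ℝ)+1) * |d.im|)⁻¹ : ℝ) * ‖A w'‖ = ((n:ℝ)+1)⁻¹ * C := by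
      rw [hC, mul_inv]
      ring
    rw [h2b] at h2a
    exact h2a
  have h3 : ‖v - w‖ < ε/(4*(K+1)) := by rw [← dist_eq_norm]; exact hwd
  have h4 : ((n:ℝ)+1)⁻¹ * C < ε/2 := by
    have hNn : (N:ℝ) ≤ (n:ℝ) := by exact_mod_cast hn
    have hn' : C/(ε/2) < (n:ℝ)+1 := by linarith
    rw [div_lt_iff₀ (by positivity)] at hn'
    have hinv : ((n:ℝ)+1)⁻¹ * (((n:ℝ)+1) * (ε/2)) = ε/2 := by
      field_simp
    calc ((n:ℝ)+1)⁻¹ * C < ((n:ℝ)+1)⁻¹ * (((n:ℝ)+1) * (ε/2)) := by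
          exact mul_lt_mul_of_pos_left hn' (by positivity)
      _ = ε/2 := hinv
  have hsum : dist ((-(((n:ℂ)+1) * d)) • R (((n:ℂ)+1)*d) v) v
      ≤ ‖(-(((n:ℂ)+1) * d)) • R (((n:ℂ)+1)*d) v - (-(((n:ℂ)+1) * d)) • R (((n:ℂ)+1)*d) w‖
        + (‖(-(((n:ℂ)+1) * d)) • R (((n:ℂ)+1)*d) w - w‖ + ‖v - w‖) := by
    rw [dist_eq_norm]
    have hre : (-(((n:ℂ)+1) * d)) • R (((n:ℂ)+1)*d) v - v
        = ((-(((n:ℂ)+1) * d)) • R (((n:ℂ)+1)*d) v - (-(((n:ℂ)+1) * d)) • R (((n:ℂ)+1)*d) w)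
          + (((-(((n:ℂ)+1) * d)) • R (((n:ℂ)+1)*d) w - w) + (w - v)) := by module
    rw [hre]
    refine (norm_add_le _ _).trans ?_
    refine add_le_add le_rfl ((norm_add_le _ _).trans ?_)
    rw [norm_sub_rev v w]
  have h6 : (K+1)*(ε/(4*(K+1))) = ε/4 := by field_simp
  have h7 : (K+1) * ‖v - w‖ < ε/4 := by
    calc (K+1) * ‖v - w‖ < (K+1) * (ε/(4*(K+1))) :=
          mul_lt_mul_of_pos_left h3 (by positivity)
      _ = ε/4 := h6
  nlinarith [norm_nonneg (v - w)]

include hA hd in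
theorem res_comm (R : ℂ → H →L[ℂ] H)
    (hmem : ∀ z : ℂ, z.im ≠ 0 → ∀ y : H, R z y ∈ A.domain)
    (hspec : ∀ z : ℂ, z.im ≠ 0 → ∀ (y : H) (h : R z y ∈ A.domain), A ⟨R z y, h⟩ = y + z • R z y)
    (huniq : ∀ z : ℂ, z.im ≠ 0 → ∀ w : A.domain, R z ((A w : H) - z • (w:H)) = (w:H))
    (B : H →L[ℂ] H) {l : ℂ}
    (hmemB : ∀ x : A.domain, B (x:H) ∈ A.domain)
    (hkey : ∀ x : A.domain, B ((A x : H)) = l • A ⟨B (x:H), hmemB x⟩)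
    (z : ℂ) (hz : z.im ≠ 0) (hz' : (l⁻¹*z).im ≠ 0) (y : H) :
    B (R z y) = l⁻¹ • R (l⁻¹*z) (B y) := by
  have hl : l ≠ 0 := by
    intro h; rw [h] at hz'; simp at hz'
  set x : A.domain := (⟨R z y, hmem z hz y⟩ : A.domain) with hxdef
  set u : A.domain := (⟨B (x:H), hmemB x⟩ : A.domain) with hudef
  have h1 : (A u : H) = l⁻¹ • B ((A x : H)) := by
    rw [hkey x, smul_smul, inv_mul_cancel₀ hl, one_smul]
  have h2 : (A x : H) = y + z • ((x:H)) := hspec z hz y (hmem z hz y)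
  have h3 : (A u : H) - (l⁻¹*z) • ((u:H)) = l⁻¹ • B y := by
    rw [h1, h2, map_add, map_smul]
    show l⁻¹ • (B y + z • B ((x:H))) - (l⁻¹*z) • (B ((x:H))) = l⁻¹ • B y
    module
  have h4 := huniq (l⁻¹*z) hz' u
  rw [h3, map_smul] at h4
  exact h4.symm

include hA hd in
theorem J_ident (B : H →L[ℂ] H) {l : ℂ} (hl : l ≠ 0)
    (hBs : ∀ u v : H, ⟪B u, v⟫ = ⟪u, B v⟫)
    (hmemB : ∀ x : A.domain, B (x:H) ∈ A.domain)
    (hkey : ∀ x : A.domain, B ((A x : H)) = l • A ⟨B (x:H), hmemB x⟩)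
    (x u : H) (hx : B x ∈ A.domain) (hu : B u ∈ A.domain) :
    ⟪A ⟨B x, hx⟩, u⟫ = l * ⟪x, A ⟨B u, hu⟩⟫ := by
  classical
  have hRex : ∀ z : ℂ, ∃ Rz : H →L[ℂ] H, z.im ≠ 0 →
      (∀ y : H, Rz y ∈ A.domain) ∧
      (∀ (y : H) (h : Rz y ∈ A.domain), A ⟨Rz y, h⟩ = y + z • Rz y) ∧
      (∀ y : H, ‖Rz y‖ ≤ |z.im|⁻¹ * ‖y‖) ∧
      (∀ w : A.domain, Rz ((A w : H) - z • (w:H)) = (w:H)) := by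
    intro z
    by_cases hz : z.im ≠ 0
    · obtain ⟨Rz, h1, h2, h3, h4⟩ := selfadj_exists_resolvent hA hd z hz
      exact ⟨Rz, fun _ => ⟨h1, h2, h3, h4⟩⟩
    · exact ⟨0, fun h => absurd h hz⟩
  choose R hR using hRex
  have hmem : ∀ z : ℂ, z.im ≠ 0 → ∀ y : H, R z y ∈ A.domain := fun z hz => ((hR z) hz).1
  have hspec : ∀ z : ℂ, z.im ≠ 0 → ∀ (y : H) (h : R z y ∈ A.domain),
      A ⟨R z y, h⟩ = y + z • R z y := fun z hz => ((hR z) hz).2.1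
  have hnorm : ∀ z : ℂ, z.im ≠ 0 → ∀ y : H, ‖R z y‖ ≤ |z.im|⁻¹ * ‖y‖ :=
    fun z hz => ((hR z) hz).2.2.1
  have huniq : ∀ z : ℂ, z.im ≠ 0 → ∀ w : A.domain, R z ((A w : H) - z • (w:H)) = (w:H) :=
    fun z hz => ((hR z) hz).2.2.2
  have hdex : ∃ d : ℂ, d.im ≠ 0 ∧ (l⁻¹*d).im ≠ 0 := by
    by_cases hc : (l⁻¹*Complex.I).im ≠ 0
    · exact ⟨Complex.I, by simp, hc⟩
    · push_neg at hc
      refine ⟨1 + Complex.I, by simp, ?_⟩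
      have h1 : (l⁻¹*Complex.I).im = l⁻¹.re := by
        rw [Complex.mul_im]; simp
      have h2 : (l⁻¹*(1+Complex.I)).im = l⁻¹.im + l⁻¹.re := by
        rw [Complex.mul_im]; simp; ring
      rw [h1] at hc
      rw [h2, hc, add_zero]
      intro hcon
      exact (inv_ne_zero hl) (Complex.ext hc hcon)
  obtain ⟨d, hd1, hd2⟩ := hdex
  have hnd : ∀ (e : ℂ), e.im ≠ 0 → ∀ n : ℕ, ((((n:ℂ)+1))*e).im ≠ 0 := by
    intro e he n
    have h1 : ((((n:ℂ)+1))*e).im = ((n:ℝ)+1) * e.im := by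
      rw [Complex.mul_im]; simp
    rw [h1]
    positivity
  have hchain : ∀ n : ℕ,
      ⟪A ⟨B x, hx⟩, (-(((n:ℂ)+1) * d)) • R (((n:ℂ)+1)*d) u⟫
        = l * ⟪x, (-(((n:ℂ)+1) * (l⁻¹*d))) • R (((n:ℂ)+1)*(l⁻¹*d)) ((A ⟨B u, hu⟩ : H))⟫ := by
    intro n
    set z : ℂ := (((n:ℂ)+1))*d with hzdef
    set z' : ℂ := (((n:ℂ)+1))*(l⁻¹*d) with hz'def
    set c : ℂ := -((((n:ℂ)+1)) * d) with hcdef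
    set c' : ℂ := -((((n:ℂ)+1)) * (l⁻¹*d)) with hc'def
    have hz : z.im ≠ 0 := hnd d hd1 n
    have hz' : z'.im ≠ 0 := hnd (l⁻¹*d) hd2 n
    have hzz' : l⁻¹ * z = z' := by rw [hzdef, hz'def]; ring
    have hcc' : c * l⁻¹ = c' := by rw [hcdef, hc'def]; ring
    have m1 : c • R z u ∈ A.domain := A.domain.smul_mem c (hmem z hz u)
    have step1 : ⟪A ⟨B x, hx⟩, c • R z u⟫ = ⟪B x, A ⟨c • R z u, m1⟩⟫ :=
      symm_selfadj hA hd ⟨B x, hx⟩ ⟨c • R z u, m1⟩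
    have step2 : ⟪B x, A ⟨c • R z u, m1⟩⟫ = ⟪x, B ((A ⟨c • R z u, m1⟩ : H))⟫ := hBs x _
    have step3 : B ((A ⟨c • R z u, m1⟩ : H)) = l • A ⟨B (c • R z u), hmemB ⟨c • R z u, m1⟩⟩ :=
      hkey ⟨c • R z u, m1⟩
    have e2 : B (c • R z u) = c' • R z' (B u) := by
      rw [map_smul, res_comm hA hd R hmem hspec huniq B hmemB hkey z hz (hzz' ▸ hz') u]
      rw [smul_smul, hcc', hzz']
    have m2 : c' • R z' (B u) ∈ A.domain := A.domain.smul_mem c' (hmem z' hz' (B u))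
    have step4 : A ⟨B (c • R z u), hmemB ⟨c • R z u, m1⟩⟩ = A ⟨c' • R z' (B u), m2⟩ :=
      pmap_apply_congr _ _ e2
    have m3 : R z' (B u) ∈ A.domain := hmem z' hz' (B u)
    have step5 : A ⟨c' • R z' (B u), m2⟩ = c' • A ⟨R z' (B u), m3⟩ := by
      have hsub : (⟨c' • R z' (B u), m2⟩ : A.domain) = c' • (⟨R z' (B u), m3⟩ : A.domain) :=
        Subtype.ext rfl
      rw [hsub]
      exact A.map_smul c' _
    have step6 : (A ⟨R z' (B u), m3⟩ : H) = B u + z' • R z' (B u) := hspec z' hz' (B u) m3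
    have e1 : R z' ((A ⟨B u, hu⟩ : H)) = B u + z' • R z' (B u) := by
      have h4 := huniq z' hz' ⟨B u, hu⟩
      have h5 : (A ⟨B u, hu⟩ : H)
          = ((A ⟨B u, hu⟩ : H) - z' • ((⟨B u, hu⟩ : A.domain) : H)) + z' • B u := by
        show (A ⟨B u, hu⟩ : H) = ((A ⟨B u, hu⟩ : H) - z' • B u) + z' • B u
        module
      rw [h5, map_add, h4, map_smul]
    calc ⟪A ⟨B x, hx⟩, c • R z u⟫
        = ⟪x, B ((A ⟨c • R z u, m1⟩ : H))⟫ := step1.trans step2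
      _ = ⟪x, l • (c' • (B u + z' • R z' (B u)))⟫ := by
          rw [step3, step4, step5, step6]
      _ = l * ⟪x, c' • R z' ((A ⟨B u, hu⟩ : H))⟫ := by
          rw [e1, inner_smul_right]
      _ = l * ⟪x, (-(((n:ℂ)+1) * (l⁻¹*d))) • R (((n:ℂ)+1)*(l⁻¹*d)) ((A ⟨B u, hu⟩ : H))⟫ := rfl
  have hLt : Filter.Tendsto
      (fun n : ℕ => ⟪A ⟨B x, hx⟩, (-(((n:ℂ)+1) * d)) • R (((n:ℂ)+1)*d) u⟫)
      Filter.atTop (𝓝 ⟪A ⟨B x, hx⟩, u⟫) :=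
    Filter.Tendsto.inner tendsto_const_nhds
      (molli_tendsto hA hd R hmem hnorm huniq d hd1 u)
  have hRt : Filter.Tendsto
      (fun n : ℕ => l * ⟪x, (-(((n:ℂ)+1) * (l⁻¹*d))) • R (((n:ℂ)+1)*(l⁻¹*d)) ((A ⟨B u, hu⟩ : H))⟫)
      Filter.atTop (𝓝 (l * ⟪x, A ⟨B u, hu⟩⟫)) := by
    apply Filter.Tendsto.const_mul
    exact Filter.Tendsto.inner tendsto_const_nhds
      (molli_tendsto hA hd R hmem hnorm huniq (l⁻¹*d) hd2 ((A ⟨B u, hu⟩ : H)))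
  have heq : (fun n : ℕ => ⟪A ⟨B x, hx⟩, (-(((n:ℂ)+1) * d)) • R (((n:ℂ)+1)*d) u⟫)
      = (fun n : ℕ => l * ⟪x, (-(((n:ℂ)+1) * (l⁻¹*d))) • R (((n:ℂ)+1)*(l⁻¹*d)) ((A ⟨B u, hu⟩ : H))⟫) :=
    funext hchain
  rw [heq] at hLt
  exact tendsto_nhds_unique hLt hRt

include hA hd in
theorem res_ident (R : ℂ → H →L[ℂ] H)
    (hmem : ∀ z : ℂ, z.im ≠ 0 → ∀ y : H, R z y ∈ A.domain)
    (hspec : ∀ z : ℂ, z.im ≠ 0 → ∀ (y : H) (h : R z y ∈ A.domain), A ⟨R z y, h⟩ = y + z • R z y)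
    (huniq : ∀ z : ℂ, z.im ≠ 0 → ∀ w : A.domain, R z ((A w : H) - z • (w:H)) = (w:H))
    (z w : ℂ) (hz : z.im ≠ 0) (hw : w.im ≠ 0) (v : H) :
    R w v - R z v = (w - z) • R w (R z v) := by
  set p := R w v with hp
  set q := R z v with hq
  have hpm : p ∈ A.domain := hmem w hw v
  have hqm : q ∈ A.domain := hmem z hz v
  have hsm : p - q ∈ A.domain := sub_mem hpm hqm
  have hsub : (⟨p - q, hsm⟩ : A.domain) = ⟨p, hpm⟩ - ⟨q, hqm⟩ := Subtype.ext rfl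
  have hAval : (A ⟨p - q, hsm⟩ : H) = (v + w • p) - (v + z • q) := by
    rw [hsub, A.map_sub, hspec w hw v hpm, hspec z hz v hqm]
  have harg : (A ⟨p - q, hsm⟩ : H) - w • ((⟨p - q, hsm⟩ : A.domain) : H) = (w - z) • q := by
    rw [hAval]
    show (v + w • p) - (v + z • q) - w • (p - q) = (w - z) • q
    module
  have h4 := huniq w hw ⟨p - q, hsm⟩
  rw [harg, map_smul] at h4
  exact h4.symm

include hA hd in
theorem res_deriv (R : ℂ → H →L[ℂ] H)
    (hmem : ∀ z : ℂ, z.im ≠ 0 → ∀ y : H, R z y ∈ A.domain)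
    (hspec : ∀ z : ℂ, z.im ≠ 0 → ∀ (y : H) (h : R z y ∈ A.domain), A ⟨R z y, h⟩ = y + z • R z y)
    (hnorm : ∀ z : ℂ, z.im ≠ 0 → ∀ y : H, ‖R z y‖ ≤ |z.im|⁻¹ * ‖y‖)
    (huniq : ∀ z : ℂ, z.im ≠ 0 → ∀ w : A.domain, R z ((A w : H) - z • (w:H)) = (w:H))
    (v : H) (z : ℂ) (hz : z.im ≠ 0) : DifferentiableAt ℂ (fun w => R w v) z := by
  have hzim : (0:ℝ) < |z.im| := abs_pos.mpr hz
  have hball : ∀ w : ℂ, dist w z < |z.im|/2 → (w.im ≠ 0 ∧ |z.im|/2 ≤ |w.im|) := by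
    intro w hwd
    have h1 : |w.im - z.im| ≤ dist w z := by
      rw [Complex.dist_eq]
      have := Complex.abs_im_le_norm (w - z)
      simpa using this
    have h2 : |w.im - z.im| < |z.im|/2 := lt_of_le_of_lt h1 hwd
    have h3 : |z.im|/2 ≤ |w.im| := by
      have := abs_sub_abs_le_abs_sub w.im z.im
      rw [abs_sub_comm] at h2
      have h4 := abs_sub_abs_le_abs_sub z.im w.im
      linarith
    exact ⟨fun h0 => by rw [h0] at h3; simp at h3; linarith, h3⟩
  -- continuity of w ↦ R w u at z within the punctured nbhd
  have hcont : ∀ u : H, Filter.Tendsto (fun w => R w (R z u)) (𝓝[≠] z) (𝓝 (R z (R z u))) := by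
    intro u
    rw [Metric.tendsto_nhdsWithin_nhds]
    intro ε hε
    refine ⟨min (|z.im|/2) (ε * (|z.im|/2) / (‖R z (R z u)‖ + 1)), by positivity, ?_⟩
    intro w hwne hwd
    have hwd1 : dist w z < |z.im|/2 := lt_of_lt_of_le hwd (min_le_left _ _)
    have hwd2 : dist w z < ε * (|z.im|/2) / (‖R z (R z u)‖ + 1) :=
      lt_of_lt_of_le hwd (min_le_right _ _)
    obtain ⟨hwim, hwim2⟩ := hball w hwd1
    have hid := res_ident hA hd R hmem hspec huniq z w hz hwim (R z u)
    rw [dist_eq_norm]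
    have h5 : R w (R z u) - R z (R z u) = (w - z) • R w (R z (R z u)) := hid
    rw [h5, norm_smul]
    have h6 : ‖R w (R z (R z u))‖ ≤ |w.im|⁻¹ * ‖R z (R z u)‖ := hnorm w hwim _
    have h7 : |w.im|⁻¹ ≤ (|z.im|/2)⁻¹ := by
      apply inv_anti₀ (by positivity) hwim2
    have h8 : ‖(w - z : ℂ)‖ = dist w z := by rw [Complex.dist_eq]
    rw [h8]
    have hRn : (0:ℝ) ≤ ‖R z (R z u)‖ := norm_nonneg _
    have h9 : ‖R w (R z (R z u))‖ ≤ (|z.im|/2)⁻¹ * (‖R z (R z u)‖ + 1) := by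
      calc ‖R w (R z (R z u))‖ ≤ |w.im|⁻¹ * ‖R z (R z u)‖ := h6
        _ ≤ (|z.im|/2)⁻¹ * ‖R z (R z u)‖ := mul_le_mul_of_nonneg_right h7 hRn
        _ ≤ (|z.im|/2)⁻¹ * (‖R z (R z u)‖ + 1) := by
            apply mul_le_mul_of_nonneg_left (by linarith) (by positivity)
    calc dist w z * ‖R w (R z (R z u))‖
        ≤ dist w z * ((|z.im|/2)⁻¹ * (‖R z (R z u)‖ + 1)) :=
          mul_le_mul_of_nonneg_left h9 dist_nonneg
      _ < (ε * (|z.im|/2) / (‖R z (R z u)‖ + 1)) * ((|z.im|/2)⁻¹ * (‖R z (R z u)‖ + 1)) :=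
          mul_lt_mul_of_pos_right hwd2 (by positivity)
      _ = ε := by field_simp
  -- derivative via slope
  have hder : HasDerivAt (fun w => R w v) (R z (R z v)) z := by
    rw [hasDerivAt_iff_tendsto_slope]
    have hev : (fun w => R w (R z v)) =ᶠ[𝓝[≠] z] slope (fun w => R w v) z := by
      have hmem' : Metric.ball z (|z.im|/2) ∩ {z}ᶜ ∈ 𝓝[≠] z := by
        apply Filter.inter_mem_inf (Metric.ball_mem_nhds z (by positivity))
        exact Filter.mem_principal_self _
      refine Filter.eventuallyEq_of_mem hmem' ?_
      rintro w ⟨hw1, hw2⟩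
      have hwim : w.im ≠ 0 := (hball w (by rwa [Metric.mem_ball] at hw1)).1
      have hid := res_ident hA hd R hmem hspec huniq z w hz hwim v
      have hwz : w - z ≠ 0 := sub_ne_zero.mpr hw2
      show R w (R z v) = (w - z)⁻¹ • (R w v - R z v)
      rw [hid, smul_smul, inv_mul_cancel₀ hwz, one_smul]
    exact (hcont v).congr' hev
  exact hder.differentiableAt

include hA hd in
theorem nonreal_kill (B : H →L[ℂ] H) {l : ℂ} (hlim : l.im ≠ 0)
    (hmemB : ∀ x : A.domain, B (x:H) ∈ A.domain)
    (hkey : ∀ x : A.domain, B ((A x : H)) = l • A ⟨B (x:H), hmemB x⟩)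
    (x : H) : ∃ h : B x ∈ A.domain, A ⟨B x, h⟩ = 0 := by
  classical
  have hl : l ≠ 0 := fun h => hlim (by rw [h]; simp)
  set y : H := B x with hy
  have hRex : ∀ z : ℂ, ∃ Rz : H →L[ℂ] H, z.im ≠ 0 →
      (∀ v : H, Rz v ∈ A.domain) ∧
      (∀ (v : H) (h : Rz v ∈ A.domain), A ⟨Rz v, h⟩ = v + z • Rz v) ∧
      (∀ v : H, ‖Rz v‖ ≤ |z.im|⁻¹ * ‖v‖) ∧
      (∀ w : A.domain, Rz ((A w : H) - z • (w:H)) = (w:H)) := by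
    intro z
    by_cases hz : z.im ≠ 0
    · obtain ⟨Rz, h1, h2, h3, h4⟩ := selfadj_exists_resolvent hA hd z hz
      exact ⟨Rz, fun _ => ⟨h1, h2, h3, h4⟩⟩
    · exact ⟨0, fun h => absurd h hz⟩
  choose R hR using hRex
  have hmem : ∀ z : ℂ, z.im ≠ 0 → ∀ v : H, R z v ∈ A.domain := fun z hz => ((hR z) hz).1
  have hspec : ∀ z : ℂ, z.im ≠ 0 → ∀ (v : H) (h : R z v ∈ A.domain),
      A ⟨R z v, h⟩ = v + z • R z v := fun z hz => ((hR z) hz).2.1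
  have hnorm : ∀ z : ℂ, z.im ≠ 0 → ∀ v : H, ‖R z v‖ ≤ |z.im|⁻¹ * ‖v‖ :=
    fun z hz => ((hR z) hz).2.2.1
  have huniq : ∀ z : ℂ, z.im ≠ 0 → ∀ w : A.domain, R z ((A w : H) - z • (w:H)) = (w:H) :=
    fun z hz => ((hR z) hz).2.2.2
  have hcomm' : ∀ z : ℂ, z.im ≠ 0 → (l*z).im ≠ 0 → R z y = l • B (R (l*z) x) := by
    intro z hz hlz
    have hsimp : l⁻¹*(l*z) = z := by field_simp
    have hz2 : (l⁻¹*(l*z)).im ≠ 0 := by rw [hsimp]; exact hz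
    have h1 := res_comm hA hd R hmem hspec huniq B hmemB hkey (l*z) hlz hz2 x
    rw [hsimp] at h1
    rw [h1, smul_smul, mul_inv_cancel₀ hl, one_smul]
  set Φ : ℂ → H := fun z => if hz : z.im ≠ 0 then R z y else l • B (R (l*z) x) with hΦ
  have hΦ1 : ∀ z : ℂ, z.im ≠ 0 → Φ z = R z y := fun z hz => dif_pos hz
  have hΦ2 : ∀ z : ℂ, (l*z).im ≠ 0 → Φ z = l • B (R (l*z) x) := by
    intro z hlz
    by_cases hz : z.im ≠ 0
    · rw [hΦ1 z hz]; exact hcomm' z hz hlz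
    · exact dif_neg hz
  have hopen1 : IsOpen {w : ℂ | w.im ≠ 0} := by
    have : Continuous fun w : ℂ => w.im := Complex.continuous_im
    exact isOpen_ne.preimage this
  have hopen2 : IsOpen {w : ℂ | (l*w).im ≠ 0} := by
    have hcont : Continuous fun w : ℂ => (l*w).im :=
      Complex.continuous_im.comp (continuous_const.mul continuous_id)
    exact isOpen_ne.preimage hcont
  have hΦdiff : ∀ z : ℂ, z ≠ 0 → DifferentiableAt ℂ Φ z := by
    intro z hz0
    by_cases hz : z.im ≠ 0
    · have hev : Φ =ᶠ[𝓝 z] (fun w => R w y) :=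
        Filter.eventuallyEq_of_mem (hopen1.mem_nhds hz) (fun w hw => hΦ1 w hw)
      exact (res_deriv hA hd R hmem hspec hnorm huniq y z hz).congr_of_eventuallyEq hev
    · push_neg at hz
      have hzre : z.re ≠ 0 := by
        intro h
        exact hz0 (Complex.ext h hz)
      have hlz : (l*z).im ≠ 0 := by
        rw [Complex.mul_im, hz, mul_zero, zero_add]
        exact mul_ne_zero hlim hzre
      have hev : Φ =ᶠ[𝓝 z] (fun w => l • B (R (l*w) x)) :=
        Filter.eventuallyEq_of_mem (hopen2.mem_nhds hlz) (fun w hw => hΦ2 w hw)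
      have hmul : DifferentiableAt ℂ (fun w : ℂ => l * w) z :=
        differentiableAt_id.const_mul l
      have hinner : DifferentiableAt ℂ (fun w : ℂ => R (l*w) x) z :=
        DifferentiableAt.comp z (res_deriv hA hd R hmem hspec hnorm huniq x (l*z) hlz) hmul
      have hBd : DifferentiableAt ℂ (fun w : ℂ => B (R (l*w) x)) z :=
        DifferentiableAt.comp z (B.differentiable.differentiableAt) hinner
      exact (hBd.const_smul l).congr_of_eventuallyEq hev
  -- lower bound on max of imaginary parts
  set c : ℝ := |l.im| / (1 + |l.re| + |l.im|) with hc
  have hc0 : 0 < c := by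
    have : 0 < |l.im| := abs_pos.mpr hlim
    positivity
  have hmax : ∀ w : ℂ, c * ‖w‖ ≤ max |w.im| |(l*w).im| := by
    intro w
    rcases le_or_gt (c * ‖w‖) |w.im| with h | h
    · exact le_max_of_le_left h
    · apply le_max_of_le_right
      have haw : (0:ℝ) ≤ ‖w‖ := norm_nonneg _
      have h1 : ‖w‖ ≤ |w.re| + |w.im| := Complex.norm_le_abs_re_add_abs_im w
      have h2 : (l*w).im = l.re * w.im + l.im * w.re := Complex.mul_im l w
      have h3 : |l.im * w.re| - |l.re * w.im| ≤ |l.re * w.im + l.im * w.re| := by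
        have h4 := abs_add_le (l.re * w.im + l.im * w.re) (-(l.re * w.im))
        have h5 : (l.re * w.im + l.im * w.re) + (-(l.re * w.im)) = l.im * w.re := by ring
        rw [h5, abs_neg] at h4
        linarith
      rw [h2]
      have h6 : |l.im * w.re| = |l.im| * |w.re| := abs_mul _ _
      have h7 : |l.re * w.im| = |l.re| * |w.im| := abs_mul _ _
      rw [h6, h7] at h3
      have h8 : c * (1 + |l.re| + |l.im|) = |l.im| := by
        rw [hc]
        field_simp
      have h9 : (|l.re| + |l.im|) * |w.im| ≤ (|l.re| + |l.im|) * (c * ‖w‖) :=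
        mul_le_mul_of_nonneg_left h.le (by positivity)
      have h10 : |l.im| * ‖w‖ ≤ |l.im| * (|w.re| + |w.im|) :=
        mul_le_mul_of_nonneg_left h1 (abs_nonneg _)
      nlinarith [abs_nonneg w.re, abs_nonneg w.im, abs_nonneg l.re, abs_nonneg l.im, haw]
  -- global bound for Ψ w = w • Φ w
  set M : ℝ := (max ‖y‖ (‖l‖ * ‖B‖ * ‖x‖)) / c with hM
  have hM0 : 0 ≤ M := by
    rw [hM]
    apply div_nonneg _ hc0.le
    exact le_trans (norm_nonneg y) (le_max_left _ _)
  have hb : ∀ w : ℂ, ‖w • Φ w‖ ≤ M := by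
    intro w
    by_cases hw0 : w = 0
    · rw [hw0]; simpa using hM0
    · have haw : 0 < ‖w‖ := by
        exact norm_pos_iff.mpr hw0
      have hcaw : 0 < c * ‖w‖ := by positivity
      rcases le_max_iff.mp (hmax w) with hside | hside
      · have hwim : w.im ≠ 0 := by
          intro h0
          rw [h0] at hside
          simp at hside
          linarith
        rw [hΦ1 w hwim, norm_smul]
        have h1 : ‖R w y‖ ≤ |w.im|⁻¹ * ‖y‖ := hnorm w hwim y
        have h2 : |w.im|⁻¹ ≤ (c * ‖w‖)⁻¹ := inv_anti₀ hcaw hside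
        have h3 : ‖R w y‖ ≤ (c * ‖w‖)⁻¹ * ‖y‖ :=
          le_trans h1 (mul_le_mul_of_nonneg_right h2 (norm_nonneg _))
        calc ‖w‖ * ‖R w y‖
            ≤ ‖w‖ * ((c * ‖w‖)⁻¹ * ‖y‖) :=
              mul_le_mul_of_nonneg_left h3 haw.le
          _ = ‖y‖ / c := by field_simp
          _ ≤ M := by
              rw [hM]
              exact (div_le_div_iff_of_pos_right hc0).mpr (le_max_left _ _)
      · have hlwim : (l*w).im ≠ 0 := by
          intro h0
          rw [h0] at hside
          simp at hside
          linarith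
        rw [hΦ2 w hlwim, norm_smul, norm_smul]
        have h1 : ‖B (R (l*w) x)‖ ≤ ‖B‖ * ‖R (l*w) x‖ := B.le_opNorm _
        have h2 : ‖R (l*w) x‖ ≤ |(l*w).im|⁻¹ * ‖x‖ := hnorm (l*w) hlwim x
        have h3 : |(l*w).im|⁻¹ ≤ (c * ‖w‖)⁻¹ := inv_anti₀ hcaw hside
        have h4 : ‖R (l*w) x‖ ≤ (c * ‖w‖)⁻¹ * ‖x‖ :=
          le_trans h2 (mul_le_mul_of_nonneg_right h3 (norm_nonneg _))
        have h5 : ‖B (R (l*w) x)‖ ≤ ‖B‖ * ((c * ‖w‖)⁻¹ * ‖x‖) :=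
          le_trans h1 (mul_le_mul_of_nonneg_left h4 (norm_nonneg _))
        calc ‖w‖ * (‖l‖ * ‖B (R (l*w) x)‖)
            ≤ ‖w‖ * (‖l‖ * (‖B‖ * ((c * ‖w‖)⁻¹ * ‖x‖))) := by
              apply mul_le_mul_of_nonneg_left _ haw.le
              exact mul_le_mul_of_nonneg_left h5 (norm_nonneg _)
          _ = (‖l‖ * ‖B‖ * ‖x‖) / c := by field_simp
          _ ≤ M := by
              rw [hM]
              exact (div_le_div_iff_of_pos_right hc0).mpr (le_max_right _ _)
  -- Liouville argument
  set Ψ : ℂ → H := fun w => w • Φ w with hΨ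
  have hdiffΨ : DifferentiableOn ℂ Ψ (Set.univ \ {0}) := by
    intro z hz
    have hz0 : z ≠ 0 := hz.2
    exact (differentiableAt_id.smul (hΦdiff z hz0)).differentiableWithinAt
  have hbddΨ : BddAbove (norm ∘ Ψ '' (Set.univ \ {0})) := by
    refine ⟨M, ?_⟩
    rintro t ⟨w, _, rfl⟩
    exact hb w
  have hupd := Complex.differentiableOn_update_limUnder_of_bddAbove
    (Filter.univ_mem) hdiffΨ hbddΨ
  set Ψ₀ : ℂ → H := Function.update Ψ 0 (limUnder (𝓝[≠] (0:ℂ)) Ψ) with hΨ₀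
  have hdiff0 : Differentiable ℂ Ψ₀ := differentiableOn_univ.mp hupd
  have hbd0 : ∀ w : ℂ, ‖Ψ₀ w‖ ≤ M := by
    intro w
    by_cases hw : w = 0
    · subst hw
      have hEv : Ψ₀ =ᶠ[𝓝[≠] (0:ℂ)] Ψ :=
        Filter.eventuallyEq_of_mem self_mem_nhdsWithin
          (fun w hw => Function.update_of_ne hw _ _)
      have htend : Filter.Tendsto Ψ₀ (𝓝[≠] (0:ℂ)) (𝓝 (Ψ₀ 0)) :=
        (hdiff0.continuous.continuousAt).tendsto.mono_left nhdsWithin_le_nhds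
      have htend' : Filter.Tendsto Ψ (𝓝[≠] (0:ℂ)) (𝓝 (Ψ₀ 0)) := htend.congr' hEv
      exact le_of_tendsto htend'.norm (Filter.Eventually.of_forall (fun w => hb w))
    · rw [hΨ₀, Function.update_of_ne hw]
      exact hb w
  obtain ⟨cst, hcst⟩ := hdiff0.exists_eq_const_of_bounded
    (isBounded_iff_forall_norm_le.mpr ⟨M, by rintro t ⟨w, rfl⟩; exact hbd0 w⟩)
  -- identify the constant as -y via the sequence i(n+1)
  have hnI : ∀ n : ℕ, ((((n:ℂ)+1))*Complex.I).im ≠ 0 := by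
    intro n
    have h1 : ((((n:ℂ)+1))*Complex.I).im = (n:ℝ)+1 := by
      rw [Complex.mul_im]; simp
    rw [h1]
    positivity
  have hnz : ∀ n : ℕ, (((n:ℂ)+1))*Complex.I ≠ 0 := by
    intro n h0
    have := hnI n
    rw [h0] at this
    simp at this
  have hseq : Filter.Tendsto (fun n : ℕ => Ψ₀ ((((n:ℂ)+1))*Complex.I))
      Filter.atTop (𝓝 (-y)) := by
    have heq : (fun n : ℕ => Ψ₀ ((((n:ℂ)+1))*Complex.I))
        = fun n : ℕ => -((-(((n:ℂ)+1) * Complex.I)) • R (((n:ℂ)+1)*Complex.I) y) := by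
      funext n
      rw [hΨ₀, Function.update_of_ne (hnz n)]
      rw [hΨ]
      show ((((n:ℂ)+1))*Complex.I) • Φ ((((n:ℂ)+1))*Complex.I) = _
      rw [hΦ1 _ (hnI n)]
      module
    rw [heq]
    exact (molli_tendsto hA hd R hmem hnorm huniq Complex.I (by simp) y).neg
  have hcst' : cst = -y := by
    have h1 : Filter.Tendsto (fun _ : ℕ => cst) Filter.atTop (𝓝 (-y)) := by
      have : (fun n : ℕ => Ψ₀ ((((n:ℂ)+1))*Complex.I)) = fun _ : ℕ => cst := by
        funext n; rw [hcst]; rfl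
      rwa [this] at hseq
    exact tendsto_nhds_unique tendsto_const_nhds h1
  -- evaluate at I
  have hIim : (Complex.I).im ≠ 0 := by simp
  have hval : Complex.I • R Complex.I y = -y := by
    have h1 : Ψ₀ Complex.I = cst := by rw [hcst]; rfl
    rw [hcst'] at h1
    rw [hΨ₀, Function.update_of_ne Complex.I_ne_zero, hΨ] at h1
    show _ = -y
    rw [← h1]
    show Complex.I • R Complex.I y = Complex.I • Φ Complex.I
    rw [hΦ1 _ hIim]
  have hRIy : R Complex.I y = Complex.I • y := by
    have h2 : (Complex.I * Complex.I) • R Complex.I y = Complex.I • (-y) := by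
      rw [← smul_smul, hval]
    rw [Complex.I_mul_I] at h2
    have h3 := congrArg (fun v : H => (-1 : ℂ) • v) h2
    rw [smul_smul, smul_smul] at h3
    norm_num at h3
    exact h3
  have hmemI : R Complex.I y ∈ A.domain := hmem Complex.I hIim y
  have hmemIy : Complex.I • y ∈ A.domain := hRIy ▸ hmemI
  have hmemy : y ∈ A.domain := by
    have := (Submodule.smul_mem_iff A.domain Complex.I_ne_zero).mp hmemIy
    exact this
  refine ⟨hmemy, ?_⟩
  have h5 := hspec Complex.I hIim y hmemI
  have h6 : A ⟨R Complex.I y, hmemI⟩ = A ⟨Complex.I • y, hmemIy⟩ :=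
    pmap_apply_congr _ _ hRIy
  rw [h6] at h5
  rw [hRIy, smul_smul, Complex.I_mul_I] at h5
  have h7 : A ⟨Complex.I • y, hmemIy⟩ = (0:H) := by
    rw [h5]
    module
  have h8 : (⟨Complex.I • y, hmemIy⟩ : A.domain) = Complex.I • (⟨y, hmemy⟩ : A.domain) :=
    Subtype.ext rfl
  rw [h8, A.map_smul] at h7
  exact (smul_right_injective H Complex.I_ne_zero) (by simpa using h7)

end stmt7aux

/-- A densely defined operator `T` is normal if it is closed and `T†T = TT†`
(equality of unbounded operators, including equality of the domains). -/
noncomputable def IsNormalOp {H : Type*} [NormedAddCommGroup H] [InnerProductSpace ℂ H] [CompleteSpace H] (T : H →ₗ.[ℂ] H) : Prop :=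
  T.IsClosed ∧ T.adjoint.pcomp T = T.pcomp T.adjoint

theorem stmt_7 {H : Type*} [NormedAddCommGroup H] [InnerProductSpace ℂ H] [CompleteSpace H]
    (A : H →ₗ.[ℂ] H) (B : H →L[ℂ] H) (l : ℂ)
    (hA_dense : Dense (A.domain : Set H)) (hA : A.adjoint = A)
    (hB : ContinuousLinearMap.adjoint B = B)
    (hcomm : (B : H →ₗ[ℂ] H).compPMap A ≤ l • A.pcomp ((B : H →ₗ[ℂ] H).toPMap ⊤))
    (hne : A.pcomp ((B : H →ₗ[ℂ] H).toPMap ⊤) ≠ 0) :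
    Dense (((A.pcomp ((B : H →ₗ[ℂ] H).toPMap ⊤)).domain : Set H)) ∧ IsNormalOp (A.pcomp ((B : H →ₗ[ℂ] H).toPMap ⊤)) := by
  classical
  set T : H →ₗ.[ℂ] H := A.pcomp ((B : H →ₗ[ℂ] H).toPMap ⊤) with hTdef
  -- inner product notation
  -- basic plumbing
  have hTmem : ∀ x : H, x ∈ T.domain ↔ B x ∈ A.domain := by
    intro x
    rw [hTdef, pcomp_mem_domain]
    constructor
    · rintro ⟨hx, hAx⟩
      have : ((B : H →ₗ[ℂ] H).toPMap ⊤) ⟨x, hx⟩ = B x := by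
        rfl
      rwa [this] at hAx
    · intro hBx
      refine ⟨Submodule.mem_top, ?_⟩
      have : ((B : H →ₗ[ℂ] H).toPMap ⊤) ⟨x, Submodule.mem_top⟩ = B x := by
        rfl
      rwa [this]
  have hTapp : ∀ (x : T.domain) (h : B (x:H) ∈ A.domain), T x = A ⟨B (x:H), h⟩ := by
    intro x h
    have h1 : ((B : H →ₗ[ℂ] H).toPMap ⊤) ⟨(x:H), Submodule.mem_top⟩ = B (x:H) := by
      rfl
    have h2 : ((B : H →ₗ[ℂ] H).toPMap ⊤) ⟨(x:H), Submodule.mem_top⟩ ∈ A.domain := by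
      rw [h1]; exact h
    have := pcomp_apply (A := A) (Bp := (B : H →ₗ[ℂ] H).toPMap ⊤) x Submodule.mem_top h2
    rw [this]
    exact pmap_apply_congr _ _ h1
  have hBs : ∀ u v : H, @inner ℂ _ _ (B u) v = @inner ℂ _ _ u (B v) := by
    intro u v
    conv_lhs => rw [← hB]
    exact ContinuousLinearMap.adjoint_inner_left B v u
  have hsub : A.domain ≤ T.domain := hcomm.1
  have hmemB : ∀ x : A.domain, B (x:H) ∈ A.domain :=
    fun x => (hTmem _).mp (hsub x.2)
  have hkey : ∀ x : A.domain, B ((A x : H)) = l • A ⟨B (x:H), hmemB x⟩ := by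
    intro x
    have h1 := hcomm.2 (x := x) (y := ⟨(x:H), hsub x.2⟩) rfl
    have h2 : ((B : H →ₗ[ℂ] H).compPMap A) x = B ((A x : H)) := by
      rfl
    have h3 : (l • T) ⟨(x:H), hsub x.2⟩ = l • T ⟨(x:H), hsub x.2⟩ :=
      LinearPMap.smul_apply l T _
    rw [h2, h3] at h1
    rw [h1]
    congr 1
  -- "T is the zero pmap" helper
  have hT0 : (∀ u : H, ∃ hu : B u ∈ A.domain, A ⟨B u, hu⟩ = 0) → T = 0 := by
    intro hk
    have hdomeq : T.domain = (0 : H →ₗ.[ℂ] H).domain := by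
      have : T.domain = ⊤ := by
        rw [Submodule.eq_top_iff']
        intro u
        exact (hTmem u).mpr (hk u).1
      rw [this]
      rfl
    apply LinearPMap.dExt hdomeq
    intro x y hxy
    have hBx : B (x:H) ∈ A.domain := (hTmem _).mp x.2
    rw [hTapp x hBx]
    have h0 : A ⟨B (x:H), hBx⟩ = 0 := by
      obtain ⟨hu, hval⟩ := hk (x:H)
      rw [← hval]
    rw [h0]
    rfl
  by_cases hl0 : l = 0
  · exfalso
    apply hne
    apply hT0
    apply kill_lemma hA hA_dense B hBs
    intro x
    rw [hkey x, hl0, zero_smul]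
  -- l ≠ 0 : J identity available
  have hJ : ∀ (x u : H) (hx : B x ∈ A.domain) (hu : B u ∈ A.domain),
      @inner ℂ _ _ ((A ⟨B x, hx⟩ : H)) u = l * @inner ℂ _ _ x ((A ⟨B u, hu⟩ : H)) :=
    fun x u hx hu => J_ident hA hA_dense B hl0 hBs hmemB hkey x u hx hu
  by_cases hl1 : l = 1 ∨ l = -1
  case neg =>
    -- contradiction cases
    exfalso
    apply hne
    apply hT0
    by_cases hlim : l.im = 0
    · -- l real, not 0, not ±1
      have hlc : (starRingEnd ℂ) l = l := Complex.conj_eq_iff_im.mpr hlim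
      have hll : l * l ≠ 1 := by
        intro h
        have h1 : (l - 1) * (l + 1) = 0 := by linear_combination h
        rcases mul_eq_zero.mp h1 with h2 | h2
        · exact hl1 (Or.inl (by linear_combination h2))
        · exact hl1 (Or.inr (by linear_combination h2))
      have hzero : ∀ (v : H) (hv : B v ∈ A.domain), A ⟨B v, hv⟩ = 0 := by
        intro v hv
        apply dense_inner_zero hA_dense
        intro u
        have hBu : B (u:H) ∈ A.domain := hmemB u
        have h1 := hJ v (u:H) hv hBu
        have h2 := hJ (u:H) v hBu hv
        have h3 := congrArg (starRingEnd ℂ) h2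
        rw [map_mul, inner_conj_symm, inner_conj_symm, hlc] at h3
        rw [h3] at h1
        have h4 : (1 - l*l) * @inner ℂ _ _ ((A ⟨B v, hv⟩ : H)) (u:H) = 0 := by
          linear_combination h1
        rcases mul_eq_zero.mp h4 with h5 | h5
        · exact absurd (by linear_combination -h5) hll
        · exact h5
      apply kill_lemma hA hA_dense B hBs
      intro x
      rw [hkey x, hzero (x:H) (hmemB x), smul_zero]
    · -- l nonreal
      exact nonreal_kill hA hA_dense B hlim hmemB hkey
  case pos =>
  -- main case : l = ±1
  have hlc : (starRingEnd ℂ) l = l := by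
    rcases hl1 with h | h <;> rw [h] <;> simp
  have hll : l * l = 1 := by
    rcases hl1 with h | h <;> rw [h] <;> norm_num
  have hdense : Dense (T.domain : Set H) := by
    apply Dense.mono _ hA_dense
    intro u hu
    exact hsub hu
  refine ⟨hdense, ?_, ?_⟩
  · -- closed
    have hAclosed := selfadj_isClosed hA hA_dense
    have hgr : (T.graph : Set (H × H))
        = (fun p : H × H => (B p.1, p.2)) ⁻¹' (A.graph : Set (H × H)) := by
      ext p
      simp only [Set.mem_preimage, SetLike.mem_coe]
      constructor
      · intro hp
        obtain ⟨w, hw1, hw2⟩ := (T.mem_graph_iff).mp hp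
        have hBw : B ((w : T.domain) : H) ∈ A.domain := (hTmem _).mp w.2
        have hBp : B p.1 ∈ A.domain := by rw [← hw1]; exact hBw
        refine (A.mem_graph_iff).mpr ⟨⟨B p.1, hBp⟩, rfl, ?_⟩
        have h5 : A ⟨B p.1, hBp⟩ = A ⟨B ((w : T.domain) : H), hBw⟩ :=
          pmap_apply_congr _ _ (congrArg B hw1.symm)
        rw [h5, ← hTapp w hBw, hw2]
      · intro hp
        obtain ⟨v, hv1, hv2⟩ := (A.mem_graph_iff).mp hp
        have hv1' : ((v : A.domain) : H) = B p.1 := hv1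
        have hv2' : (A v : H) = p.2 := hv2
        have hBp : B p.1 ∈ A.domain := by rw [← hv1']; exact v.2
        have hp1 : p.1 ∈ T.domain := (hTmem _).mpr hBp
        refine (T.mem_graph_iff).mpr ⟨⟨p.1, hp1⟩, rfl, ?_⟩
        rw [hTapp ⟨p.1, hp1⟩ hBp, ← hv2']
        exact pmap_apply_congr _ _ hv1'.symm
    rw [LinearPMap.IsClosed, hgr]
    exact hAclosed.preimage ((B.continuous.comp continuous_fst).prodMk continuous_snd)
  · -- normal equation
    have hAform := LinearPMap.adjoint_isFormalAdjoint (T := T) hdense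
    have hstep : ∀ v : T.adjoint.domain, ∃ h' : B ((v : T.adjoint.domain) : H) ∈ A.domain,
        A ⟨B ((v : T.adjoint.domain) : H), h'⟩ = (starRingEnd ℂ) l • T.adjoint v := by
      intro v
      have hw : ∀ x : A.domain,
          @inner ℂ _ _ ((starRingEnd ℂ) l • (T.adjoint v : H)) ((x : A.domain) : H)
            = @inner ℂ _ _ (B ((v : T.adjoint.domain) : H)) ((A x : H)) := by
        intro x
        have hBx : B ((x : A.domain) : H) ∈ A.domain := hmemB x
        have hxT : ((x : A.domain) : H) ∈ T.domain := (hTmem _).mpr hBx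
        calc @inner ℂ _ _ ((starRingEnd ℂ) l • (T.adjoint v : H)) ((x : A.domain) : H)
            = l * @inner ℂ _ _ ((T.adjoint v : H)) ((x : A.domain) : H) := by
              rw [inner_smul_left]
              congr 1
              exact Complex.conj_conj l
          _ = l * @inner ℂ _ _ ((v : T.adjoint.domain) : H) ((T ⟨((x : A.domain) : H), hxT⟩ : H)) := by
              rw [hAform v ⟨((x : A.domain) : H), hxT⟩]
          _ = l * @inner ℂ _ _ ((v : T.adjoint.domain) : H) ((A ⟨B ((x : A.domain) : H), hBx⟩ : H)) := by
              rw [hTapp ⟨((x : A.domain) : H), hxT⟩ hBx]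
          _ = @inner ℂ _ _ ((v : T.adjoint.domain) : H) (l • (A ⟨B ((x : A.domain) : H), hBx⟩ : H)) :=
              (inner_smul_right _ _ _).symm
          _ = @inner ℂ _ _ ((v : T.adjoint.domain) : H) (B ((A x : H))) := by
              rw [← hkey x]
          _ = @inner ℂ _ _ (B ((v : T.adjoint.domain) : H)) ((A x : H)) := (hBs _ _).symm
      have hmemadj : B ((v : T.adjoint.domain) : H) ∈ A.adjoint.domain :=
        LinearPMap.mem_adjoint_domain_of_exists _ ⟨(starRingEnd ℂ) l • (T.adjoint v : H), hw⟩
      have hval : A.adjoint ⟨B ((v : T.adjoint.domain) : H), hmemadj⟩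
          = (starRingEnd ℂ) l • (T.adjoint v : H) :=
        LinearPMap.adjoint_apply_eq hA_dense ⟨B ((v : T.adjoint.domain) : H), hmemadj⟩ hw
      have hmem' : B ((v : T.adjoint.domain) : H) ∈ A.domain := hA ▸ hmemadj
      refine ⟨hmem', ?_⟩
      rw [← hval]
      exact (pmap_eq_apply hA ⟨B ((v : T.adjoint.domain) : H), hmemadj⟩
        ⟨B ((v : T.adjoint.domain) : H), hmem'⟩ rfl).symm
    have hadj : T.adjoint = l • T := by
      apply le_antisymm
      · -- T† ≤ l • T
        refine ⟨?_, ?_⟩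
        · intro v hv
          obtain ⟨h', _⟩ := hstep ⟨v, hv⟩
          exact (hTmem v).mpr h'
        · intro v y hxy
          obtain ⟨h', hval⟩ := hstep v
          have hyT : ((y : (l • T).domain) : H) ∈ T.domain := y.2
          have hBy : B ((y : (l • T).domain) : H) ∈ A.domain := (hTmem _).mp hyT
          rw [LinearPMap.smul_apply]
          have h2 : l • (A ⟨B ((v : T.adjoint.domain) : H), h'⟩ : H) = T.adjoint v := by
            rw [hval, smul_smul, hlc, hll, one_smul]
          rw [← h2]
          congr 1
          have h4 : T y = A ⟨B ((y : (l • T).domain) : H), hBy⟩ := hTapp _ hBy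
          rw [h4]
          exact pmap_apply_congr _ _ (congrArg B hxy)
      · -- l • T ≤ T†
        have hformal : T.IsFormalAdjoint (l • T) := by
          intro x y
          have hBx : B ((x : T.domain) : H) ∈ A.domain := (hTmem _).mp x.2
          have hyT : ((y : (l • T).domain) : H) ∈ T.domain := y.2
          have hBy : B ((y : (l • T).domain) : H) ∈ A.domain := (hTmem _).mp hyT
          rw [LinearPMap.smul_apply, inner_smul_right]
          rw [hTapp x hBx]
          have h1 : T y = A ⟨B ((y : (l • T).domain) : H), hBy⟩ := hTapp _ hBy
          rw [h1]
          exact hJ _ _ hBx hBy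
        exact LinearPMap.IsFormalAdjoint.le_adjoint hdense hformal
    rw [hadj]
    -- (l•T).pcomp T = T.pcomp (l•T)
    have hdomeq : ((l • T).pcomp T).domain = (T.pcomp (l • T)).domain := by
      ext u
      simp only [pcomp_mem_domain]
      constructor
      · rintro ⟨hu, hTu⟩
        refine ⟨hu, ?_⟩
        have h1 : (l • T) ⟨u, hu⟩ = l • T ⟨u, hu⟩ := LinearPMap.smul_apply l T ⟨u, hu⟩
        rw [h1]
        exact Submodule.smul_mem _ l hTu
      · rintro ⟨hu, hTu⟩
        refine ⟨hu, ?_⟩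
        have h1 : (l • T) ⟨u, hu⟩ = l • T ⟨u, hu⟩ := LinearPMap.smul_apply l T ⟨u, hu⟩
        rw [h1] at hTu
        exact (Submodule.smul_mem_iff T.domain hl0).mp hTu
    apply LinearPMap.dExt hdomeq
    intro x y hxy
    obtain ⟨hx1, hx2⟩ := pcomp_mem_domain.mp x.2
    obtain ⟨hy1, hy2⟩ := pcomp_mem_domain.mp y.2
    rw [pcomp_apply x hx1 hx2, pcomp_apply y hy1 hy2]
    have e0 : T ⟨(x:H), hx1⟩ = T ⟨(y:H), hy1⟩ := pmap_apply_congr _ _ hxy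
    have hTy : T ⟨(y:H), hy1⟩ ∈ T.domain := by rw [← e0]; exact hx2
    have eL : (l • T) ⟨T ⟨(x:H), hx1⟩, hx2⟩ = l • T ⟨T ⟨(y:H), hy1⟩, hTy⟩ := by
      rw [LinearPMap.smul_apply]
      congr 1
      exact pmap_apply_congr _ _ e0
    have hsmul1 : (l • T) ⟨(y:H), hy1⟩ = l • T ⟨(y:H), hy1⟩ := LinearPMap.smul_apply l T _
    have hsmulmem : l • (T ⟨(y:H), hy1⟩ : H) ∈ T.domain := by
      rw [← hsmul1]
      exact hy2
    have hTy' : (T ⟨(y:H), hy1⟩ : H) ∈ T.domain :=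
      (Submodule.smul_mem_iff T.domain hl0).mp hsmulmem
    have eR : T ⟨(l • T) ⟨(y:H), hy1⟩, hy2⟩ = l • T ⟨T ⟨(y:H), hy1⟩, hTy'⟩ := by
      have e1 : T ⟨(l • T) ⟨(y:H), hy1⟩, hy2⟩ = T ⟨l • (T ⟨(y:H), hy1⟩ : H), hsmulmem⟩ :=
        pmap_apply_congr _ _ hsmul1
      rw [e1]
      have e2 : (⟨l • (T ⟨(y:H), hy1⟩ : H), hsmulmem⟩ : T.domain)
          = l • (⟨(T ⟨(y:H), hy1⟩ : H), hTy'⟩ : T.domain) := Subtype.ext rfl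
      rw [e2]
      exact T.map_smul l _
    rw [eL, eR]
end

section
/- Let A be a densely defined (possibly unbounded) self-adjoint operator on a complex Hilbert space H and let B be a bounded self-adjoint operator on H. Assume BA ⊆ λAB for some complex number λ with AB ≠ 0. If B is positive or −B is positive, then λ = 1. -/
open Complex Set Filter NormedSpace
open scoped Real ComplexConjugate

noncomputable section Stmt9Aux

/-- Phragmén–Lindelöf: an entire function of exponential type bounded on the two
half-planes `{re ≤ 0}` and `{re (e^{iθ} w) ≤ 0}` (with `0 < θ ≤ π`) is bounded everywhere. -/
lemma stmt9_pl_cover (Φ : ℂ → ℂ) (hd : Differentiable ℂ Φ) {C M : ℝ} (hM : 0 ≤ M)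
    (hgrow : ∀ w : ℂ, ‖Φ w‖ ≤ M * Real.exp (M * ‖w‖))
    {θ : ℝ} (hθ0 : 0 < θ) (hθπ : θ ≤ π)
    (h1 : ∀ w : ℂ, w.re ≤ 0 → ‖Φ w‖ ≤ C)
    (h2 : ∀ w : ℂ, (Complex.exp (θ * Complex.I) * w).re ≤ 0 → ‖Φ w‖ ≤ C)
    (w : ℂ) : ‖Φ w‖ ≤ C := by
  rcases eq_or_lt_of_le hθπ with rfl | hθπ'
  · by_cases hre : w.re ≤ 0
    · exact h1 _ hre
    · apply h2
      rw [Complex.exp_pi_mul_I]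
      simp only [neg_one_mul, Complex.neg_re]
      linarith
  by_cases hw1 : w.re ≤ 0
  · exact h1 w hw1
  by_cases hw2 : (Complex.exp (θ * Complex.I) * w).re ≤ 0
  · exact h2 w hw2
  push_neg at hw1 hw2
  have hw0 : w ≠ 0 := by
    intro h; rw [h] at hw1; simp at hw1
  have habs : 0 < ‖w‖ := norm_pos_iff.mpr hw0
  have harg1 : |Complex.arg w| < π / 2 := Complex.abs_arg_lt_pi_div_two_iff.mpr (Or.inl hw1)
  have harg2 : Complex.arg w ≤ π / 2 - θ := by
    by_contra hcon
    push_neg at hcon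
    have hmul : Complex.exp (θ * Complex.I) * w
        = (‖w‖ : ℂ) * Complex.exp (((θ + Complex.arg w : ℝ) : ℂ) * Complex.I) := by
      conv_lhs => rw [← Complex.norm_mul_exp_arg_mul_I w]
      rw [Complex.ofReal_add, add_mul, Complex.exp_add]
      ring
    have hre : (Complex.exp (θ * Complex.I) * w).re
        = ‖w‖ * Real.cos (θ + Complex.arg w) := by
      have hre' : ∀ t : ℝ, (Complex.exp ((t:ℂ) * Complex.I)).re = Real.cos t := fun t => by
        rw [Complex.exp_mul_I]; simp [Complex.cos_ofReal_re]
      rw [hmul, Complex.mul_re]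
      simp only [Complex.ofReal_re, Complex.ofReal_im, zero_mul, sub_zero, hre']
    have hcos : Real.cos (θ + Complex.arg w) ≤ 0 := by
      apply Real.cos_nonpos_of_pi_div_two_le_of_le
      · linarith
      · rw [abs_lt] at harg1; linarith [Real.pi_pos]
    nlinarith
  have key : ∀ z : ℂ, z.im ∈ Icc (-(π/2)) (π/2 - θ) → ‖(Φ ∘ Complex.exp) z‖ ≤ C := by
    intro z hz
    apply PhragmenLindelof.horizontal_strip (a := -(π/2)) (b := π/2 - θ)
      ((hd.comp differentiable_exp).diffContOnCl) ?_ ?_ ?_ hz.1 hz.2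
    · refine ⟨1, ?_, M, ?_⟩
      · have hba : (π/2 - θ) - (-(π/2)) = π - θ := by ring
        rw [hba]
        exact (one_lt_div (by linarith)).mpr (by linarith)
      · apply Asymptotics.IsBigO.of_bound M
        apply Filter.Eventually.of_forall
        intro z
        have h0 := hgrow (Complex.exp z)
        rw [Complex.norm_exp] at h0
        have h1 : M * Real.exp z.re ≤ M * Real.exp |z.re| := by
          have := Real.exp_le_exp.mpr (le_abs_self z.re)
          nlinarith
        have h2 : Real.exp (M * Real.exp z.re) ≤ Real.exp (M * Real.exp |z.re|) :=
          Real.exp_le_exp.mpr h1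
        calc ‖Φ (Complex.exp z)‖ ≤ M * Real.exp (M * Real.exp z.re) := h0
          _ ≤ M * Real.exp (M * Real.exp |z.re|) := by nlinarith [Real.exp_pos (M * Real.exp z.re)]
          _ = M * ‖Real.exp (M * Real.exp (1 * |z.re|))‖ := by
              rw [one_mul, Real.norm_eq_abs, abs_of_pos (Real.exp_pos _)]
    · intro z hzim
      apply h1
      rw [Complex.exp_re, hzim]
      simp [Real.cos_pi_div_two]
    · intro z hzim
      apply h2
      rw [← Complex.exp_add]
      have hre : ((θ : ℂ) * Complex.I + z).re = z.re := by simp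
      rw [Complex.exp_re, hre]
      have him : ((θ : ℂ) * Complex.I + z).im = θ + z.im := by simp
      rw [him, hzim]
      have : θ + (π/2 - θ) = π/2 := by ring
      rw [this, Real.cos_pi_div_two]
      simp
  have hlog : Complex.exp (Complex.log w) = w := Complex.exp_log hw0
  have := key (Complex.log w)
    ⟨by rw [Complex.log_im]; linarith [(abs_lt.mp harg1).1],
     by rw [Complex.log_im]; exact harg2⟩
  simpa [Function.comp, hlog] using this

variable {H : Type*} [NormedAddCommGroup H] [InnerProductSpace ℂ H] [CompleteSpace H]

local notation "⟪" x ", " y "⟫" => @inner ℂ _ _ x y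

lemma stmt9_hasDerivAt_exp_path (B : H →L[ℂ] H) (s : ℂ) (x : H) (t : ℝ) :
    HasDerivAt (fun t : ℝ => NormedSpace.exp (((t : ℂ) * s) • B) x) (s • B (NormedSpace.exp (((t:ℂ)*s) • B) x)) t := by
  have h1 : HasDerivAt (fun u : ℂ => NormedSpace.exp (u • B)) (B * NormedSpace.exp (((t:ℂ)*s) • B)) ((t:ℂ)*s) :=
    hasDerivAt_exp_smul_const' B _
  have h2 : HasDerivAt (fun u : ℝ => (u : ℂ) * s) s t := by
    simpa using (hasDerivAt_mul_const (x := (t:ℂ)) s).comp_ofReal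
  have h3 : HasDerivAt (fun t : ℝ => NormedSpace.exp (((t:ℂ)*s) • B)) (s • (B * NormedSpace.exp (((t:ℂ)*s) • B))) t :=
    by have := h1.scomp t h2; exact this
  have h4 := (((ContinuousLinearMap.apply ℂ H x).restrictScalars ℝ).hasFDerivAt
      (x := NormedSpace.exp (((t:ℂ)*s) • B))).comp_hasDerivAt t h3
  simpa [ContinuousLinearMap.mul_apply, Function.comp_def] using h4

lemma stmt9_selfadj_inner_im (B : H →L[ℂ] H) (hB : ContinuousLinearMap.adjoint B = B) (u : H) :
    (⟪B u, u⟫).im = 0 := by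
  have hsa : ⟪B u, u⟫ = ⟪u, B u⟫ := by
    conv_lhs => rw [← hB]
    exact ContinuousLinearMap.adjoint_inner_left B u u
  have : (starRingEnd ℂ) ⟪B u, u⟫ = ⟪B u, u⟫ := by
    nth_rewrite 2 [hsa]; exact inner_conj_symm _ _
  exact Complex.conj_eq_iff_im.mp this

/-- If `B` is positive and `re s ≤ 0` then `exp (s • B)` is a contraction. -/
lemma stmt9_contraction (B : H →L[ℂ] H) (hpos : B.IsPositive) (s : ℂ) (hs : s.re ≤ 0) (x : H) :
    ‖NormedSpace.exp (s • B) x‖ ≤ ‖x‖ := by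
  have hB : ContinuousLinearMap.adjoint B = B := hpos.isSelfAdjoint
  set e : ℝ → H := fun t => NormedSpace.exp (((t : ℂ) * s) • B) x with he
  have hderiv : ∀ t : ℝ, HasDerivAt (fun t => (⟪e t, e t⟫).re)
      (2 * s.re * (⟪B (e t), e t⟫).re) t := by
    intro t
    have hd := stmt9_hasDerivAt_exp_path B s x t
    have hinner : HasDerivAt (fun t => ⟪e t, e t⟫)
        (⟪e t, s • B (e t)⟫ + ⟪s • B (e t), e t⟫) t := hd.inner ℂ hd
    have h5 := Complex.reCLM.hasFDerivAt.comp_hasDerivAt t hinner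
    refine HasDerivAt.congr_deriv h5 ?_
    have hsa : ⟪B (e t), e t⟫ = ⟪e t, B (e t)⟫ := by
      conv_lhs => rw [← hB]
      exact ContinuousLinearMap.adjoint_inner_left B (e t) (e t)
    have hzr : (⟪B (e t), e t⟫).im = 0 := stmt9_selfadj_inner_im B hB (e t)
    simp only [Function.comp, Complex.reCLM_apply, inner_smul_right, inner_smul_left, ← hsa,
      Complex.add_re, Complex.mul_re, Complex.conj_re, Complex.conj_im, hzr]
    ring
  have hmono : ∀ t : ℝ, 0 ≤ t → (⟪e t, e t⟫).re ≤ (⟪e 0, e 0⟫).re := by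
    intro t ht
    have : AntitoneOn (fun t => (⟪e t, e t⟫).re) (Set.Icc 0 t) := by
      have hdiffg : Differentiable ℝ (fun t => (⟪e t, e t⟫).re) :=
        fun u => (hderiv u).differentiableAt
      apply antitoneOn_of_deriv_nonpos (convex_Icc 0 t) (hdiffg.continuous.continuousOn)
        (fun u _ => (hderiv u).differentiableAt.differentiableWithinAt)
      intro u hu
      rw [(hderiv u).deriv]
      have h1 : 0 ≤ (⟪B (e u), e u⟫).re := hpos.re_inner_nonneg_left (e u)
      nlinarith
    exact this (Set.left_mem_Icc.mpr ht) (Set.mem_Icc.mpr ⟨ht, le_refl t⟩) ht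
  have h0 : e 0 = x := by simp [he, NormedSpace.exp_zero]
  have h1 : e 1 = NormedSpace.exp (s • B) x := by norm_num [he]
  have hle := hmono 1 zero_le_one
  rw [h0, h1] at hle
  have hx2 : (⟪x, x⟫).re = ‖x‖ ^ 2 := by
    rw [← inner_self_eq_norm_sq (𝕜 := ℂ)]; rfl
  have hy2 : (⟪NormedSpace.exp (s • B) x, NormedSpace.exp (s • B) x⟫).re = ‖NormedSpace.exp (s • B) x‖ ^ 2 := by
    rw [← inner_self_eq_norm_sq (𝕜 := ℂ)]; rfl
  rw [hx2, hy2] at hle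
  nlinarith [norm_nonneg (NormedSpace.exp (s • B) x), norm_nonneg x]

/-- Power series expansion of `⟪u, exp (s • B) v⟫`. -/
lemma stmt9_inner_exp_apply (B : H →L[ℂ] H) (u v : H) (s : ℂ) :
    ⟪u, NormedSpace.exp (s • B) v⟫ = ∑' n : ℕ, ((n.factorial : ℂ)⁻¹ * s ^ n) * ⟪u, (B ^ n) v⟫ := by
  have hsum : Summable (fun n : ℕ => ((n.factorial : ℂ))⁻¹ • (s • B) ^ n) :=
    expSeries_summable' (s • B)
  have h1 : NormedSpace.exp (s • B) v = ∑' n : ℕ, (((n.factorial : ℂ))⁻¹ • (s • B) ^ n) v := by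
    rw [exp_eq_tsum ℂ]
    exact (ContinuousLinearMap.apply ℂ H v).map_tsum hsum
  have hsum2 : Summable (fun n : ℕ => (((n.factorial : ℂ))⁻¹ • (s • B) ^ n) v) :=
    hsum.map (ContinuousLinearMap.apply ℂ H v) (ContinuousLinearMap.apply ℂ H v).continuous
  rw [h1]
  have h2 : ⟪u, ∑' n : ℕ, (((n.factorial : ℂ))⁻¹ • (s • B) ^ n) v⟫
      = ∑' n : ℕ, ⟪u, (((n.factorial : ℂ))⁻¹ • (s • B) ^ n) v⟫ :=
    (innerSL ℂ u).map_tsum hsum2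
  rw [h2]
  refine tsum_congr fun n => ?_
  rw [smul_pow, smul_smul]
  rw [ContinuousLinearMap.smul_apply, inner_smul_right]

lemma stmt9_norm_exp_op_le (T : H →L[ℂ] H) : ‖NormedSpace.exp T‖ ≤ Real.exp ‖T‖ := by
  rw [exp_eq_tsum ℂ]
  refine (norm_tsum_le_tsum_norm (norm_expSeries_summable' T)).trans ?_
  rw [Real.exp_eq_exp_ℝ, exp_eq_tsum ℝ]
  refine Summable.tsum_le_tsum (fun n => ?_) (norm_expSeries_summable' T) (expSeries_summable' (𝕂 := ℝ) ‖T‖)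
  rw [norm_smul]
  simp only [norm_inv, Complex.norm_natCast, smul_eq_mul]
  have hTn : ‖T ^ n‖ ≤ ‖T‖ ^ n := by
    rcases Nat.eq_zero_or_pos n with rfl | hn
    · simpa [ContinuousLinearMap.one_def] using ContinuousLinearMap.norm_id_le
    · exact norm_pow_le' T hn
  have : (0:ℝ) ≤ ((n.factorial : ℝ))⁻¹ := by positivity
  exact mul_le_mul_of_nonneg_left hTn this

/-- Liouville extraction: if `s ↦ ⟪u, exp (s • B) v⟫` is bounded, then `⟪u, B v⟫ = 0`. -/
lemma stmt9_extract (B : H →L[ℂ] H) (u v : H) {C : ℝ}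
    (hC : ∀ s : ℂ, ‖⟪u, NormedSpace.exp (s • B) v⟫‖ ≤ C) : ⟪u, B v⟫ = 0 := by
  set Φ : ℂ → ℂ := fun s => ⟪u, NormedSpace.exp (s • B) v⟫ with hΦ
  have hdexp : Differentiable ℂ (fun s : ℂ => NormedSpace.exp (s • B)) :=
    fun s => (hasDerivAt_exp_smul_const B s).differentiableAt
  have hdiff : Differentiable ℂ Φ := by
    apply (innerSL ℂ u).differentiable.comp
    exact ((ContinuousLinearMap.apply ℂ H v).differentiable.comp hdexp)
  have hbd : Bornology.IsBounded (Set.range Φ) := by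
    rw [Metric.isBounded_iff_subset_closedBall 0]
    refine ⟨C, ?_⟩
    rintro _ ⟨s, rfl⟩
    simpa [Metric.mem_closedBall, dist_eq_norm] using hC s
  have hconst : ∀ s : ℂ, Φ s = Φ 0 := fun s =>
    hdiff.apply_eq_apply_of_bounded hbd s 0
  have hd0 : HasDerivAt Φ ⟪u, B v⟫ 0 := by
    have h1 : HasDerivAt (fun s : ℂ => NormedSpace.exp (s • B)) (B * NormedSpace.exp ((0:ℂ) • B)) 0 :=
      hasDerivAt_exp_smul_const' B 0
    have h4 := (((innerSL ℂ u).comp (ContinuousLinearMap.apply ℂ H v)).hasFDerivAt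
        (x := NormedSpace.exp ((0:ℂ) • B))).comp_hasDerivAt 0 h1
    have : ((innerSL ℂ u).comp (ContinuousLinearMap.apply ℂ H v)) (B * NormedSpace.exp ((0:ℂ) • B))
        = ⟪u, B v⟫ := by
      simp [exp_zero, ContinuousLinearMap.mul_apply]
    rw [← this]
    exact h4
  have hΦconst : Φ = fun _ => Φ 0 := funext hconst
  have hd0' : HasDerivAt (fun _ : ℂ => Φ 0) ⟪u, B v⟫ 0 := hΦconst ▸ hd0
  exact ((hasDerivAt_const (0:ℂ) (Φ 0)).unique hd0').symm

end Stmt9Aux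

section Stmt9Main

variable {H : Type*} [NormedAddCommGroup H] [InnerProductSpace ℂ H] [CompleteSpace H]

local notation "⟪" x ", " y "⟫" => @inner ℂ _ _ x y

lemma stmt9_mem_pcomp_domain_iff (A : H →ₗ.[ℂ] H) (B : H →L[ℂ] H) (x : H) :
    x ∈ (A.pcomp ((B : H →ₗ[ℂ] H).toPMap ⊤)).domain ↔ B x ∈ A.domain := by
  simp [LinearPMap.pcomp, LinearPMap.comp, LinearMap.compPMap, LinearPMap.domRestrict,
    LinearPMap.codRestrict, Submodule.mem_map, Submodule.mem_comap, LinearMap.toPMap]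
  exact ⟨fun ⟨y, hy, hyx⟩ => by subst hyx; exact hy, fun h => ⟨⟨x, trivial⟩, h, rfl⟩⟩

lemma stmt9_pcomp_apply (A : H →ₗ.[ℂ] H) (B : H →L[ℂ] H) (x : H)
    (hx : x ∈ (A.pcomp ((B : H →ₗ[ℂ] H).toPMap ⊤)).domain) (hBx : B x ∈ A.domain) :
    A.pcomp ((B : H →ₗ[ℂ] H).toPMap ⊤) ⟨x, hx⟩ = A ⟨B x, hBx⟩ := rfl

lemma stmt9_symm {A : H →ₗ.[ℂ] H} (hA_dense : Dense (A.domain : Set H)) (hA : A.adjoint = A)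
    (x y : A.domain) : ⟪(A x : H), (y : H)⟫ = ⟪(x : H), (A y : H)⟫ := by
  have hfa := LinearPMap.adjoint_isFormalAdjoint hA_dense (T := A)
  have hx' : (x : H) ∈ A.adjoint.domain := (le_of_eq hA.symm).1 x.2
  have heq : A.adjoint ⟨(x : H), hx'⟩ = A x := (le_of_eq hA).2 (by rfl)
  calc ⟪(A x : H), (y:H)⟫ = ⟪(A.adjoint ⟨(x:H), hx'⟩ : H), (y:H)⟫ := by rw [heq]
    _ = ⟪(x:H), (A y : H)⟫ := hfa ⟨(x:H), hx'⟩ y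

lemma stmt9_max {A : H →ₗ.[ℂ] H} (hA_dense : Dense (A.domain : Set H)) (hA : A.adjoint = A)
    {v z : H} (h : ∀ x : A.domain, ⟪z, (x : H)⟫ = ⟪v, (A x : H)⟫) :
    ∃ hv : v ∈ A.domain, A ⟨v, hv⟩ = z := by
  have hmem : v ∈ A.adjoint.domain := LinearPMap.mem_adjoint_domain_of_exists _ ⟨z, h⟩
  have hv : v ∈ A.domain := (le_of_eq hA).1 hmem
  refine ⟨hv, ?_⟩
  have heq : A.adjoint ⟨v, hmem⟩ = A ⟨v, hv⟩ := (le_of_eq hA).2 (by rfl)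
  rw [← heq]
  exact LinearPMap.adjoint_apply_eq hA_dense _ h

lemma stmt9_B_inner {B : H →L[ℂ] H} (hB : ContinuousLinearMap.adjoint B = B) (n : ℕ) (u w : H) :
    ⟪(B ^ n) u, w⟫ = ⟪u, (B ^ n) w⟫ := by
  have hstar : star B = B := by rw [ContinuousLinearMap.star_eq_adjoint, hB]
  have hpow : ContinuousLinearMap.adjoint (B ^ n) = B ^ n := by
    rw [← ContinuousLinearMap.star_eq_adjoint, star_pow, hstar]
  conv_lhs => rw [← hpow]
  exact ContinuousLinearMap.adjoint_inner_left _ w u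

lemma stmt9_Bsa {B : H →L[ℂ] H} (hB : ContinuousLinearMap.adjoint B = B) (u w : H) :
    ⟪B u, w⟫ = ⟪u, B w⟫ := by
  conv_lhs => rw [← hB]
  exact ContinuousLinearMap.adjoint_inner_left B w u

variable {A : H →ₗ.[ℂ] H} {B : H →L[ℂ] H} {l : ℂ}

lemma stmt9_pow_step (hmem : ∀ x : A.domain, B (x : H) ∈ A.domain)
    (hval : ∀ (x : A.domain) (h : B (x:H) ∈ A.domain), B ((A x : H)) = l • (A ⟨B (x:H), h⟩ : H)) :
    ∀ (n : ℕ) (x : A.domain), ∃ h : (B ^ n) (x:H) ∈ A.domain,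
      (B ^ n) ((A x : H)) = l ^ n • (A ⟨(B ^ n) (x:H), h⟩ : H) := by
  intro n
  induction n with
  | zero =>
    intro x
    refine ⟨by simpa using x.2, by simp⟩
  | succ n ih =>
    intro x
    obtain ⟨hn, hvn⟩ := ih x
    have hmem1 : B ((B ^ n) (x:H)) ∈ A.domain := hmem ⟨_, hn⟩
    have hc : (B ^ (n+1)) (x:H) = B ((B ^ n) (x:H)) := by
      rw [pow_succ']; rfl
    have hx1 : (B ^ (n+1)) (x:H) ∈ A.domain := by rw [hc]; exact hmem1
    refine ⟨hx1, ?_⟩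
    have hpt : (⟨B ((B ^ n) (x:H)), hmem1⟩ : A.domain) = ⟨(B ^ (n+1)) (x:H), hx1⟩ :=
      Subtype.ext hc.symm
    calc (B ^ (n+1)) ((A x : H)) = B ((B ^ n) ((A x : H))) := by rw [pow_succ']; rfl
      _ = B (l ^ n • (A ⟨(B ^ n) (x:H), hn⟩ : H)) := by rw [hvn]
      _ = l ^ n • B ((A ⟨(B ^ n) (x:H), hn⟩ : H)) := map_smul B _ _
      _ = l ^ n • (l • (A ⟨B ((B ^ n) (x:H)), hmem1⟩ : H)) := by
          rw [hval ⟨(B ^ n) (x:H), hn⟩ hmem1]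
      _ = l ^ (n+1) • (A ⟨(B ^ (n+1)) (x:H), hx1⟩ : H) := by
          rw [hpt, smul_smul, ← pow_succ]

lemma stmt9_moment (hsymm : ∀ x y : A.domain, ⟪(A x : H), (y:H)⟫ = ⟪(x:H), (A y : H)⟫)
    (hB : ContinuousLinearMap.adjoint B = B)
    (hmem : ∀ x : A.domain, B (x : H) ∈ A.domain)
    (hval : ∀ (x : A.domain) (h : B (x:H) ∈ A.domain), B ((A x : H)) = l • (A ⟨B (x:H), h⟩ : H))
    (n : ℕ) (x y : A.domain) :
    ⟪(A x : H), (B ^ n) (y:H)⟫ = (starRingEnd ℂ l) ^ n * ⟪(x:H), (B ^ n) ((A y : H))⟫ := by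
  obtain ⟨hn, hvn⟩ := stmt9_pow_step hmem hval n x
  calc ⟪(A x : H), (B ^ n) (y:H)⟫ = ⟪(B ^ n) ((A x : H)), (y:H)⟫ := (stmt9_B_inner hB n _ _).symm
    _ = ⟪l ^ n • (A ⟨(B ^ n) (x:H), hn⟩ : H), (y:H)⟫ := by rw [hvn]
    _ = (starRingEnd ℂ) (l ^ n) * ⟪(A ⟨(B ^ n) (x:H), hn⟩ : H), (y:H)⟫ := inner_smul_left _ _ _
    _ = (starRingEnd ℂ) (l ^ n) * ⟪(B ^ n) (x:H), (A y : H)⟫ := by rw [hsymm ⟨_, hn⟩ y]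
    _ = (starRingEnd ℂ l) ^ n * ⟪(x:H), (B ^ n) ((A y : H))⟫ := by
        rw [stmt9_B_inner hB n, map_pow]

lemma stmt9_FH (hsymm : ∀ x y : A.domain, ⟪(A x : H), (y:H)⟫ = ⟪(x:H), (A y : H)⟫)
    (hB : ContinuousLinearMap.adjoint B = B)
    (hmem : ∀ x : A.domain, B (x : H) ∈ A.domain)
    (hval : ∀ (x : A.domain) (h : B (x:H) ∈ A.domain), B ((A x : H)) = l • (A ⟨B (x:H), h⟩ : H))
    (x y : A.domain) (s : ℂ) :
    ⟪(A x : H), NormedSpace.exp (s • B) (y : H)⟫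
      = ⟪(x : H), NormedSpace.exp ((starRingEnd ℂ l * s) • B) ((A y : H))⟫ := by
  rw [stmt9_inner_exp_apply, stmt9_inner_exp_apply]
  refine tsum_congr fun n => ?_
  rw [stmt9_moment hsymm hB hmem hval n x y, mul_pow]
  ring

/-- If `s ↦ ⟪u, exp (s • B) v⟫` is bounded on the half plane `{re (μ w) ≤ 0}` with
`arg μ > 0`, and `B` is positive, then `⟪u, B v⟫ = 0`. -/
lemma stmt9_inner_B_zero (hpos : B.IsPositive) (u v : H) {μ : ℂ} {D : ℝ}
    (hμarg : 0 < μ.arg)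
    (h2 : ∀ w : ℂ, (μ * w).re ≤ 0 → ‖⟪u, NormedSpace.exp (w • B) v⟫‖ ≤ D) :
    ⟪u, B v⟫ = 0 := by
  have hμ0 : μ ≠ 0 := by
    intro h; rw [h] at hμarg; simp [Complex.arg_zero] at hμarg
  set C : ℝ := max D (‖u‖ * ‖v‖) with hC
  set M : ℝ := max ‖B‖ (‖u‖ * ‖v‖) with hM
  have hM0 : 0 ≤ M := le_trans (norm_nonneg B) (le_max_left _ _)
  have hgrow : ∀ w : ℂ, ‖⟪u, NormedSpace.exp (w • B) v⟫‖ ≤ M * Real.exp (M * ‖w‖) := by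
    intro w
    have h1 : ‖⟪u, NormedSpace.exp (w • B) v⟫‖ ≤ ‖u‖ * ‖v‖ * ‖NormedSpace.exp (w • B)‖ := by
      calc ‖⟪u, NormedSpace.exp (w • B) v⟫‖ ≤ ‖u‖ * ‖NormedSpace.exp (w • B) v‖ := norm_inner_le_norm _ _
        _ ≤ ‖u‖ * (‖NormedSpace.exp (w • B)‖ * ‖v‖) := by
            have := (NormedSpace.exp (w • B)).le_opNorm v
            have hu : (0:ℝ) ≤ ‖u‖ := norm_nonneg u
            nlinarith
        _ = ‖u‖ * ‖v‖ * ‖NormedSpace.exp (w • B)‖ := by ring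
    have h2' : ‖NormedSpace.exp (w • B)‖ ≤ Real.exp (M * ‖w‖) := by
      refine (stmt9_norm_exp_op_le _).trans ?_
      apply Real.exp_le_exp.mpr
      rw [norm_smul]
      have h3 : ‖B‖ ≤ M := le_max_left _ _
      have h4 : (0:ℝ) ≤ ‖w‖ := norm_nonneg w
      nlinarith
    calc ‖⟪u, NormedSpace.exp (w • B) v⟫‖ ≤ ‖u‖ * ‖v‖ * ‖NormedSpace.exp (w • B)‖ := h1
      _ ≤ M * Real.exp (M * ‖w‖) := by
          have h5 : ‖u‖ * ‖v‖ ≤ M := le_max_right _ _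
          have h6 : (0:ℝ) < Real.exp (M * ‖w‖) := Real.exp_pos _
          have h7 : ‖NormedSpace.exp (w • B)‖ ≤ Real.exp (M * ‖w‖) := h2'
          have h8 : (0:ℝ) ≤ ‖u‖ * ‖v‖ := by positivity
          nlinarith [norm_nonneg (NormedSpace.exp (w • B))]
  have hdiff : Differentiable ℂ (fun w : ℂ => ⟪u, NormedSpace.exp (w • B) v⟫) := by
    apply (innerSL ℂ u).differentiable.comp
    exact ((ContinuousLinearMap.apply ℂ H v).differentiable.comp
      (fun s => (hasDerivAt_exp_smul_const B s).differentiableAt))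
  have hbound : ∀ w : ℂ, ‖⟪u, NormedSpace.exp (w • B) v⟫‖ ≤ C := by
    intro w
    apply stmt9_pl_cover (fun w : ℂ => ⟪u, NormedSpace.exp (w • B) v⟫) hdiff hM0 hgrow
      hμarg (Complex.arg_le_pi μ) ?_ ?_ w
    · intro w hw
      calc ‖⟪u, NormedSpace.exp (w • B) v⟫‖ ≤ ‖u‖ * ‖NormedSpace.exp (w • B) v‖ := norm_inner_le_norm _ _
        _ ≤ ‖u‖ * ‖v‖ := by
            have := stmt9_contraction B hpos w hw v
            have hu : (0:ℝ) ≤ ‖u‖ := norm_nonneg u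
            nlinarith
        _ ≤ C := le_max_right _ _
    · intro w hw
      refine (h2 w ?_).trans (le_max_left _ _)
      have hpolar : μ = (‖μ‖ : ℂ) * Complex.exp (μ.arg * Complex.I) :=
        (Complex.norm_mul_exp_arg_mul_I μ).symm
      have : (μ * w).re = ‖μ‖ * (Complex.exp (μ.arg * Complex.I) * w).re := by
        conv_lhs => rw [hpolar, mul_assoc]
        rw [Complex.mul_re]
        simp [Complex.ofReal_re, Complex.ofReal_im]
      rw [this]
      have h4 : (0:ℝ) ≤ ‖μ‖ := norm_nonneg μ
      nlinarith
  exact stmt9_extract B u v hbound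

lemma stmt9_core (hA_dense : Dense (A.domain : Set H)) (hA : A.adjoint = A)
    (hB : ContinuousLinearMap.adjoint B = B) (hpos : B.IsPositive)
    (hmem : ∀ x : A.domain, B (x : H) ∈ A.domain)
    (hval : ∀ (x : A.domain) (h : B (x:H) ∈ A.domain), B ((A x : H)) = l • (A ⟨B (x:H), h⟩ : H)) :
    l = 1 ∨ ∀ x : A.domain, B ((A x : H)) = 0 := by
  have hsymm := stmt9_symm hA_dense hA
  by_cases hz : ∀ x : A.domain, B ((A x : H)) = 0
  · exact Or.inr hz
  left
  push_neg at hz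
  obtain ⟨y₀, hy₀⟩ := hz
  have hl0 : l ≠ 0 := by
    intro h
    apply hy₀
    rw [hval y₀ (hmem y₀), h, zero_smul]
  -- Step 1: `l` is a nonnegative real
  have hargl : l.arg = 0 := by
    by_contra hargne
    rcases lt_trichotomy l.arg 0 with hneg | h0 | hposarg
    · -- use `F(s) = ⟪A x, exp (s B) y⟫`, bounded on `{re ≤ 0}` and `{re (conj l * s) ≤ 0}`
      have hF0 : ∀ x y : A.domain, ⟪(A x : H), B (y : H)⟫ = 0 := by
        intro x y
        apply stmt9_inner_B_zero hpos ((A x : H)) ((y : H)) (μ := starRingEnd ℂ l)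
          (D := ‖(x:H)‖ * ‖(A y : H)‖)
        · rw [Complex.arg_conj]
          rw [if_neg (by intro h; rw [h] at hneg; linarith [Real.pi_pos])]
          linarith
        · intro w hw
          rw [stmt9_FH hsymm hB hmem hval x y w]
          calc ‖⟪(x:H), NormedSpace.exp ((starRingEnd ℂ l * w) • B) ((A y : H))⟫‖
              ≤ ‖(x:H)‖ * ‖NormedSpace.exp ((starRingEnd ℂ l * w) • B) ((A y : H))‖ :=
                norm_inner_le_norm _ _
            _ ≤ ‖(x:H)‖ * ‖(A y : H)‖ := by
                have := stmt9_contraction B hpos _ hw ((A y : H))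
                have hx : (0:ℝ) ≤ ‖(x:H)‖ := norm_nonneg _
                nlinarith
      apply hy₀
      apply hA_dense.eq_zero_of_inner_left ℂ
      intro v hv; obtain ⟨y, rfl⟩ : ∃ y : A.domain, (y : H) = v := ⟨⟨v, hv⟩, rfl⟩
      rw [stmt9_Bsa hB ((A y₀ : H)) (y:H)]
      exact hF0 y₀ y
    · exact hargne h0
    · -- use `H(w) = ⟪x, exp (w B) (A y)⟫`, bounded on `{re ≤ 0}` and `{re (l w) ≤ 0}`
      have hH0 : ∀ x y : A.domain, ⟪(x : H), B ((A y : H))⟫ = 0 := by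
        intro x y
        apply stmt9_inner_B_zero hpos ((x : H)) ((A y : H)) (μ := l)
          (D := ‖(A x : H)‖ * ‖(y : H)‖) hposarg
        intro w hw
        have hcl0 : starRingEnd ℂ l ≠ 0 := by simpa using hl0
        have hcl : starRingEnd ℂ l * (w / starRingEnd ℂ l) = w := by
          field_simp
        have hFH := stmt9_FH hsymm hB hmem hval x y (w / starRingEnd ℂ l)
        rw [hcl] at hFH
        rw [← hFH]
        have hsre : (w / starRingEnd ℂ l).re ≤ 0 := by
          rw [Complex.div_re]
          have h1 : (starRingEnd ℂ l).re = l.re := Complex.conj_re l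
          have h2 : (starRingEnd ℂ l).im = -l.im := Complex.conj_im l
          rw [h1, h2]
          have hsq : (0:ℝ) < Complex.normSq (starRingEnd ℂ l) := by
            rw [Complex.normSq_pos]; exact hcl0
          have hlw : (l * w).re = l.re * w.re - l.im * w.im := Complex.mul_re l w
          rw [Complex.normSq_conj] at hsq ⊢
          have : w.re * l.re + w.im * (-l.im) = (l * w).re := by rw [hlw]; ring
          rw [← add_div, this]
          apply div_nonpos_of_nonpos_of_nonneg hw (le_of_lt hsq)
        calc ‖⟪(A x : H), NormedSpace.exp ((w / starRingEnd ℂ l) • B) ((y : H))⟫‖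
            ≤ ‖(A x : H)‖ * ‖NormedSpace.exp ((w / starRingEnd ℂ l) • B) ((y : H))‖ :=
              norm_inner_le_norm _ _
          _ ≤ ‖(A x : H)‖ * ‖(y : H)‖ := by
              have := stmt9_contraction B hpos _ hsre ((y : H))
              have hx : (0:ℝ) ≤ ‖(A x : H)‖ := norm_nonneg _
              nlinarith
      apply hy₀
      apply hA_dense.eq_zero_of_inner_right ℂ
      intro v hv; obtain ⟨y, rfl⟩ : ∃ y : A.domain, (y : H) = v := ⟨⟨v, hv⟩, rfl⟩
      exact hH0 y y₀
  -- Step 2: `conj l * l = 1`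
  have hex : ∃ y₁ : A.domain, ⟪B ((A y₀ : H)), (y₁ : H)⟫ ≠ 0 := by
    by_contra hcon
    push_neg at hcon
    exact hy₀ (hA_dense.eq_zero_of_inner_left ℂ (fun v hv => hcon ⟨v, hv⟩))
  obtain ⟨y₁, hc0⟩ := hex
  have hcne : ⟪(A y₀ : H), B (y₁ : H)⟫ ≠ 0 := by
    rw [← stmt9_Bsa hB]; exact hc0
  have m1 : ⟪(A y₀ : H), B (y₁:H)⟫ = starRingEnd ℂ l * ⟪(y₀:H), B ((A y₁ : H))⟫ := by
    simpa [pow_one] using stmt9_moment hsymm hB hmem hval 1 y₀ y₁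
  have m2 : ⟪(A y₁ : H), B (y₀:H)⟫ = starRingEnd ℂ l * ⟪(y₁:H), B ((A y₀ : H))⟫ := by
    simpa [pow_one] using stmt9_moment hsymm hB hmem hval 1 y₁ y₀
  have h3 : ⟪(y₀:H), B ((A y₁ : H))⟫ = l * ⟪(A y₀ : H), B (y₁ : H)⟫ := by
    calc ⟪(y₀:H), B ((A y₁:H))⟫ = ⟪B (y₀:H), (A y₁:H)⟫ := (stmt9_Bsa hB _ _).symm
      _ = starRingEnd ℂ ⟪(A y₁:H), B (y₀:H)⟫ := (inner_conj_symm _ _).symm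
      _ = starRingEnd ℂ (starRingEnd ℂ l * ⟪(y₁:H), B ((A y₀:H))⟫) := by rw [m2]
      _ = l * starRingEnd ℂ ⟪(y₁:H), B ((A y₀:H))⟫ := by
          rw [map_mul, Complex.conj_conj]
      _ = l * ⟪B ((A y₀:H)), (y₁:H)⟫ := by rw [inner_conj_symm]
      _ = l * ⟪(A y₀ : H), B (y₁:H)⟫ := by rw [stmt9_Bsa hB]
  have key : ⟪(A y₀ : H), B (y₁:H)⟫ = (starRingEnd ℂ l * l) * ⟪(A y₀ : H), B (y₁:H)⟫ := by
    conv_lhs => rw [m1, h3]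
    ring
  have hll : starRingEnd ℂ l * l = 1 := by
    have h4 : (starRingEnd ℂ l * l) * ⟪(A y₀ : H), B (y₁:H)⟫ = 1 * ⟪(A y₀ : H), B (y₁:H)⟫ := by
      rw [← key, one_mul]
    exact mul_right_cancel₀ hcne h4
  -- Step 3: conclude
  obtain ⟨hre0, him0⟩ := Complex.arg_eq_zero_iff.mp hargl
  have hconj : starRingEnd ℂ l = l := Complex.conj_eq_iff_im.mpr him0
  rw [hconj] at hll
  have hfact : (l - 1) * (l + 1) = 0 := by linear_combination hll
  rcases mul_eq_zero.mp hfact with h | h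
  · exact sub_eq_zero.mp h
  · exfalso
    have : l = -1 := by linear_combination h
    rw [this] at hre0
    norm_num at hre0

lemma stmt9_Z (hA_dense : Dense (A.domain : Set H)) (hA : A.adjoint = A)
    (hB : ContinuousLinearMap.adjoint B = B)
    (hz : ∀ x : A.domain, B ((A x : H)) = 0) :
    A.pcomp ((B : H →ₗ[ℂ] H).toPMap ⊤) = 0 := by
  have key : ∀ v : H, ∃ h : B v ∈ A.domain, A ⟨B v, h⟩ = 0 := by
    intro v
    apply stmt9_max hA_dense hA
    intro x
    rw [inner_zero_left, stmt9_Bsa hB v ((A x : H)), hz x, inner_zero_right]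
  refine LinearPMap.ext ?_ ?_
  · have hz : (0 : H →ₗ.[ℂ] H).domain = ⊤ := rfl
    rw [hz, Submodule.eq_top_iff']
    intro v
    exact (stmt9_mem_pcomp_domain_iff A B v).mpr (key v).1
  · rintro x hx hy
    rw [stmt9_pcomp_apply A B x hx ((stmt9_mem_pcomp_domain_iff A B x).mp hx)]
    have h0 : (0 : H →ₗ.[ℂ] H) ⟨x, hy⟩ = 0 := rfl
    rw [h0, (key x).2]

end Stmt9Main

theorem stmt_9 {H : Type*} [NormedAddCommGroup H] [InnerProductSpace ℂ H] [CompleteSpace H]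
    (A : H →ₗ.[ℂ] H) (B : H →L[ℂ] H) (l : ℂ)
    (hA_dense : Dense (A.domain : Set H)) (hA : A.adjoint = A)
    (hB : ContinuousLinearMap.adjoint B = B)
    (hcomm : (B : H →ₗ[ℂ] H).compPMap A ≤ l • A.pcomp ((B : H →ₗ[ℂ] H).toPMap ⊤))
    (hne : A.pcomp ((B : H →ₗ[ℂ] H).toPMap ⊤) ≠ 0)
    (hpos : B.IsPositive ∨ (-B).IsPositive) :
    l = 1 := by
  obtain ⟨hdom, hvals⟩ := hcomm
  have hmem : ∀ x : A.domain, B (x : H) ∈ A.domain := fun x =>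
    (stmt9_mem_pcomp_domain_iff A B (x : H)).mp (hdom x.2)
  have hval : ∀ (x : A.domain) (h : B (x:H) ∈ A.domain),
      B ((A x : H)) = l • (A ⟨B (x:H), h⟩ : H) := by
    intro x h
    have h1 := hvals (x := ⟨(x:H), x.2⟩) (y := ⟨(x:H), hdom x.2⟩) rfl
    calc B ((A x : H)) = ((B : H →ₗ[ℂ] H).compPMap A) ⟨(x:H), x.2⟩ := rfl
      _ = (l • A.pcomp ((B : H →ₗ[ℂ] H).toPMap ⊤)) ⟨(x:H), hdom x.2⟩ := h1
      _ = l • (A ⟨B (x:H), h⟩ : H) := by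
          rw [LinearPMap.smul_apply, stmt9_pcomp_apply A B _ _ h]
  cases hpos with
  | inl hp =>
    rcases stmt9_core hA_dense hA hB hp hmem hval with h1 | h2
    · exact h1
    · exact absurd (stmt9_Z hA_dense hA hB h2) hne
  | inr hp =>
    have hBneg : ContinuousLinearMap.adjoint (-B) = -B := by
      rw [← ContinuousLinearMap.star_eq_adjoint, star_neg,
        ContinuousLinearMap.star_eq_adjoint, hB]
    have hmem' : ∀ x : A.domain, (-B) (x : H) ∈ A.domain := fun x => by
      have := A.domain.neg_mem (hmem x)
      simpa using this
    have hval' : ∀ (x : A.domain) (h : (-B) (x:H) ∈ A.domain),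
        (-B) ((A x : H)) = l • (A ⟨(-B) (x:H), h⟩ : H) := by
      intro x h
      have hBx : B (x:H) ∈ A.domain := by
        have := A.domain.neg_mem h
        simpa using this
      have hv := hval x hBx
      have hpt : (⟨(-B) (x:H), h⟩ : A.domain) = -(⟨B (x:H), hBx⟩ : A.domain) := by
        apply Subtype.ext
        simp
      have hAneg : (A ⟨(-B) (x:H), h⟩ : H) = -(A ⟨B (x:H), hBx⟩ : H) := by
        rw [hpt]
        exact LinearPMap.map_neg A _
      rw [ContinuousLinearMap.neg_apply, hv, hAneg, smul_neg]
    rcases stmt9_core hA_dense hA hBneg hp hmem' hval' with h1 | h2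
    · exact h1
    · have h2' : ∀ x : A.domain, B ((A x : H)) = 0 := fun x => by
        have := h2 x
        rwa [ContinuousLinearMap.neg_apply, neg_eq_zero] at this
      exact absurd (stmt9_Z hA_dense hA hB h2') hne
end

section
/- Let A, N and M be densely defined (possibly unbounded) operators on a complex Hilbert space H, each invertible with an everywhere-defined bounded inverse, and assume N and M are normal. If AN = MA (equality of operators including domains), then A*M = NA* and AN* = M*A. -/
/-- `T` is invertible with an everywhere-defined bounded inverse `S`:
`T S = I` and `S T ⊆ I`. -/
def HasBoundedInverse {H : Type*} [NormedAddCommGroup H] [InnerProductSpace ℂ H] [CompleteSpace H] (T : H →ₗ.[ℂ] H) : Prop :=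
  ∃ S : H →L[ℂ] H, (∀ y : H, ∃ h : S y ∈ T.domain, T ⟨S y, h⟩ = y) ∧
    ∀ x : T.domain, S (T x) = x


open NormedSpace

lemma my_exp_comm {𝔸 : Type*} [NormedRing 𝔸] [NormedAlgebra ℂ 𝔸] [CompleteSpace 𝔸]
    {n a m : 𝔸} (h : n * a = a * m) (z : ℂ) :
    exp (z • n) * a = a * exp (z • m) := by
  have hpow : ∀ k : ℕ, n ^ k * a = a * m ^ k := by
    intro k; induction k with
    | zero => simp
    | succ k ih => rw [pow_succ, pow_succ, mul_assoc, h, ← mul_assoc, ih, mul_assoc]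
  simp only [exp_eq_tsum ℂ]
  rw [← (expSeries_summable' (𝕂 := ℂ) (z • n)).tsum_mul_right a,
    ← (expSeries_summable' (𝕂 := ℂ) (z • m)).tsum_mul_left a]
  refine tsum_congr fun k => ?_
  rw [smul_mul_assoc, mul_smul_comm, smul_pow, smul_pow, smul_mul_assoc, mul_smul_comm,
    hpow k]

section FP
variable {H : Type*} [NormedAddCommGroup H] [InnerProductSpace ℂ H] [CompleteSpace H]

lemma norm_exp_skew {b : H →L[ℂ] H} (hb : star b = -b) : ‖exp b‖ ≤ 1 := by
  let _ : NormedAlgebra ℚ (H →L[ℂ] H) := .restrictScalars ℚ ℂ (H →L[ℂ] H)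
  have h1 : star (exp b) * exp b = 1 := by
    rw [star_exp, hb, ← exp_add_of_commute (Commute.refl b).neg_left, neg_add_cancel, exp_zero]
  have h2 : ‖exp b‖ * ‖exp b‖ ≤ 1 := by
    rw [← CStarRing.norm_star_mul_self, h1, ContinuousLinearMap.one_def]
    exact ContinuousLinearMap.norm_id_le
  nlinarith [norm_nonneg (exp b)]

lemma fuglede_putnam_s11 {n m a : H →L[ℂ] H}
    (hn : Commute (star n) n) (hm : Commute (star m) m) (h : n * a = a * m) :
    star n * a = a * star m := by
  let _ : NormedAlgebra ℚ (H →L[ℂ] H) := .restrictScalars ℚ ℂ (H →L[ℂ] H)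
  have key : ∀ z : ℂ, exp (z • star n) * a = a * exp (z • star m) := by
    set f : ℂ → (H →L[ℂ] H) := fun z =>
      exp (z • star n) * a * exp ((-z) • star m) with hf
    have hdiff : Differentiable ℂ f := by
      have d1 : Differentiable ℂ fun z : ℂ => exp (z • star n) :=
        fun z => (hasDerivAt_exp_smul_const (𝕂 := ℂ) (star n) z).differentiableAt
      have d2 : Differentiable ℂ fun z : ℂ => exp ((-z) • star m) := by
        have : (fun z : ℂ => exp ((-z) • star m)) = fun z : ℂ => exp (z • (-(star m))) := by
          funext z; rw [neg_smul, smul_neg]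
        rw [this]
        exact fun z => (hasDerivAt_exp_smul_const (𝕂 := ℂ) (-(star m)) z).differentiableAt
      exact (d1.mul (differentiable_const a)).mul d2
    have hbound : ∀ z, ‖f z‖ ≤ ‖a‖ := by
      intro z
      set c := (starRingEnd ℂ) z with hc
      have ha : a = exp ((-c) • n) * a * exp (c • m) := by
        have := my_exp_comm h (-c)
        rw [this, mul_assoc, ← exp_add_of_commute, neg_smul, neg_add_cancel, exp_zero, mul_one]
        exact ((Commute.refl m).smul_right c).smul_left (-c)
      have hcomb1 : exp (z • star n) * exp ((-c) • n) = exp (z • star n + (-c) • n) :=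
        (exp_add_of_commute ((hn.smul_left z).smul_right (-c))).symm
      have hcomb2 : exp (c • m) * exp ((-z) • star m) = exp (c • m + (-z) • star m) :=
        (exp_add_of_commute ((hm.symm.smul_left c).smul_right (-z))).symm
      have hskew1 : star (z • star n + (-c) • n) = -(z • star n + (-c) • n) := by
        simp [star_smul, hc, neg_add, RCLike.star_def, add_comm]
      have hskew2 : star (c • m + (-z) • star m) = -(c • m + (-z) • star m) := by
        simp [star_smul, hc, neg_add, RCLike.star_def, add_comm]
      have hfz : f z = exp (z • star n + (-c) • n) * a * exp (c • m + (-z) • star m) := by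
        rw [hf]
        conv_lhs => rw [ha]
        rw [← hcomb1, ← hcomb2]
        simp only [mul_assoc]
      rw [hfz]
      have e1 := norm_exp_skew hskew1
      have e2 := norm_exp_skew hskew2
      have t1 : ‖exp (z • star n + (-c) • n) * a * exp (c • m + (-z) • star m)‖
          ≤ ‖exp (z • star n + (-c) • n)‖ * ‖a‖ * ‖exp (c • m + (-z) • star m)‖ :=
        (norm_mul_le _ _).trans (by gcongr; exact norm_mul_le _ _)
      refine t1.trans ?_
      have t2 : ‖exp (z • star n + (-c) • n)‖ * ‖a‖ * ‖exp (c • m + (-z) • star m)‖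
          ≤ 1 * ‖a‖ * 1 := by
        gcongr <;> first | exact e1 | exact e2 | positivity
      simpa using t2
    have hbdd : Bornology.IsBounded (Set.range f) := by
      rw [Metric.isBounded_iff_subset_closedBall 0]
      exact ⟨‖a‖, by rintro x ⟨z, rfl⟩; simpa using hbound z⟩
    have hconst : ∀ z, f z = f 0 := fun z => hdiff.apply_eq_apply_of_bounded hbdd z 0
    have hf0 : f 0 = a := by simp [hf, exp_zero]
    intro z
    have h1 : f z = a := (hconst z).trans hf0
    have h2 : exp ((-z) • star m) * exp (z • star m) = 1 := by
      rw [← exp_add_of_commute (((Commute.refl (star m)).smul_right z).smul_left (-z)),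
        neg_smul, neg_add_cancel, exp_zero]
    calc exp (z • star n) * a
        = exp (z • star n) * a * (exp ((-z) • star m) * exp (z • star m)) := by
          rw [h2, mul_one]
      _ = f z * exp (z • star m) := by rw [← mul_assoc]
      _ = a * exp (z • star m) := by rw [h1]
  have hd1 : HasDerivAt (fun z : ℂ => exp (z • star n) * a) (star n * a) 0 := by
    have := (hasDerivAt_exp_smul_const (𝕂 := ℂ) (star n) 0).mul_const a
    simpa using this
  have hd2 : HasDerivAt (fun z : ℂ => a * exp (z • star m)) (a * star m) 0 := by
    have := (hasDerivAt_exp_smul_const' (𝕂 := ℂ) (star m) 0).const_mul a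
    simpa using this
  have heq : (fun z : ℂ => exp (z • star n) * a) = fun z : ℂ => a * exp (z • star m) :=
    funext key
  rw [heq] at hd1
  exact hd1.unique hd2

end FP

section PM
variable {H : Type*} [NormedAddCommGroup H] [InnerProductSpace ℂ H] [CompleteSpace H]

/-- `S` is an everywhere-defined bounded inverse of `T`. -/
def IsInvOf (S : H →L[ℂ] H) (T : H →ₗ.[ℂ] H) : Prop :=
  (∀ y : H, ∃ h : S y ∈ T.domain, T ⟨S y, h⟩ = y) ∧ ∀ x : T.domain, S (T x) = x

lemma IsInvOf.graph_iff {T : H →ₗ.[ℂ] H} {S : H →L[ℂ] H} (hS : IsInvOf S T) {x y : H} :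
    (x, y) ∈ T.graph ↔ S y = x := by
  rw [LinearPMap.mem_graph_iff]
  constructor
  · rintro ⟨u, hu1, hu2⟩
    dsimp only at hu1 hu2
    rw [← hu2, hS.2, hu1]
  · rintro rfl
    obtain ⟨hm, hTy⟩ := hS.1 y
    exact ⟨⟨S y, hm⟩, rfl, hTy⟩

lemma mem_pcomp_domain {A B : H →ₗ.[ℂ] H} {x : H} :
    x ∈ (A.pcomp B).domain ↔ ∃ hx : x ∈ B.domain, B ⟨x, hx⟩ ∈ A.domain := by
  show x ∈ ((A.domain.comap B.toFun).map B.domain.subtype) ⊓ B.domain ↔ _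
  rw [Submodule.mem_inf]
  constructor
  · rintro ⟨h1, h2⟩
    obtain ⟨u, hu, hux⟩ := Submodule.mem_map.mp h1
    refine ⟨h2, ?_⟩
    have : (⟨x, h2⟩ : B.domain) = u := by ext; exact hux.symm
    rw [this]
    exact hu
  · rintro ⟨hx, hBx⟩
    exact ⟨Submodule.mem_map.mpr ⟨⟨x, hx⟩, hBx, rfl⟩, hx⟩

lemma pcomp_apply' {A B : H →ₗ.[ℂ] H} (u : (A.pcomp B).domain) (hx : (u:H) ∈ B.domain)
    (hBx : B ⟨u, hx⟩ ∈ A.domain) : A.pcomp B u = A ⟨B ⟨u, hx⟩, hBx⟩ := by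
  show A _ = _
  congr 1

lemma pcomp_graph_iff {T1 T2 : H →ₗ.[ℂ] H} {S1 S2 : H →L[ℂ] H}
    (h1 : IsInvOf S1 T1) (h2 : IsInvOf S2 T2) {x y : H} :
    (x, y) ∈ (T1.pcomp T2).graph ↔ S2 (S1 y) = x := by
  rw [LinearPMap.mem_graph_iff]
  constructor
  · rintro ⟨u, hu1, hu2⟩
    dsimp only at hu1 hu2
    obtain ⟨hx, hBx⟩ := mem_pcomp_domain.mp u.2
    rw [pcomp_apply' u hx hBx] at hu2
    have e1 : S1 y = T2 ⟨(u : H), hx⟩ := h1.graph_iff.mp (by rw [← hu2]; exact T1.mem_graph ⟨T2 ⟨(u : H), hx⟩, hBx⟩)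
    have e2 : S2 (T2 ⟨(u : H), hx⟩) = (u : H) := h2.2 _
    rw [e1, e2, hu1]
  · rintro rfl
    obtain ⟨hw, hT1⟩ := h1.1 y
    obtain ⟨hx, hT2⟩ := h2.1 (S1 y)
    have hmem : S2 (S1 y) ∈ (T1.pcomp T2).domain :=
      mem_pcomp_domain.mpr ⟨hx, by rw [hT2]; exact hw⟩
    refine ⟨⟨S2 (S1 y), hmem⟩, rfl, ?_⟩
    rw [pcomp_apply' ⟨S2 (S1 y), hmem⟩ hx (by rw [hT2]; exact hw)]
    have : (⟨T2 ⟨S2 (S1 y), hx⟩, by rw [hT2]; exact hw⟩ : T1.domain) = ⟨S1 y, hw⟩ := by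
      ext; exact hT2
    rw [this, hT1]

lemma pcomp_eq_pcomp_iff {T1 T2 T1' T2' : H →ₗ.[ℂ] H} {S1 S2 S1' S2' : H →L[ℂ] H}
    (h1 : IsInvOf S1 T1) (h2 : IsInvOf S2 T2) (h1' : IsInvOf S1' T1') (h2' : IsInvOf S2' T2') :
    T1.pcomp T2 = T1'.pcomp T2' ↔ ∀ y, S2 (S1 y) = S2' (S1' y) := by
  constructor
  · intro he y
    have hmem : (S2 (S1 y), y) ∈ (T1.pcomp T2).graph := (pcomp_graph_iff h1 h2).mpr rfl
    rw [he] at hmem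
    exact ((pcomp_graph_iff h1' h2').mp hmem).symm
  · intro hy
    apply LinearPMap.eq_of_eq_graph
    ext ⟨x, y⟩
    rw [pcomp_graph_iff h1 h2, pcomp_graph_iff h1' h2', hy]

open scoped InnerProductSpace in
lemma IsInvOf.adjoint {T : H →ₗ.[ℂ] H} {S : H →L[ℂ] H} (hS : IsInvOf S T)
    (hT : Dense (T.domain : Set H)) :
    IsInvOf (ContinuousLinearMap.adjoint S) T.adjoint := by
  constructor
  · intro y
    have hkey : ∀ x : T.domain, ⟪y, (x : H)⟫_ℂ = ⟪ContinuousLinearMap.adjoint S y, T x⟫_ℂ := by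
      intro x
      rw [ContinuousLinearMap.adjoint_inner_left, hS.2]
    have hmem : ContinuousLinearMap.adjoint S y ∈ T.adjoint.domain :=
      LinearPMap.mem_adjoint_domain_of_exists _ ⟨y, hkey⟩
    exact ⟨hmem, LinearPMap.adjoint_apply_eq hT _ fun x => hkey x⟩
  · intro x
    apply ext_inner_right ℂ
    intro z
    obtain ⟨hz, hTz⟩ := hS.1 z
    rw [ContinuousLinearMap.adjoint_inner_left]
    calc ⟪(T.adjoint x : H), S z⟫_ℂ = ⟪T.adjoint x, (⟨S z, hz⟩ : T.domain)⟫_ℂ := rfl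
      _ = ⟪(x : H), T ⟨S z, hz⟩⟫_ℂ := LinearPMap.adjoint_isFormalAdjoint hT x ⟨S z, hz⟩
      _ = ⟪(x : H), z⟫_ℂ := by rw [hTz]

end PM


theorem stmt_11 {H : Type*} [NormedAddCommGroup H] [InnerProductSpace ℂ H] [CompleteSpace H]
    (A N M : H →ₗ.[ℂ] H)
    (hA_dense : Dense (A.domain : Set H)) (hN_dense : Dense (N.domain : Set H))
    (hM_dense : Dense (M.domain : Set H))
    (hA_inv : HasBoundedInverse A) (hN_inv : HasBoundedInverse N)
    (hM_inv : HasBoundedInverse M)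
    (hN : IsNormalOp N) (hM : IsNormalOp M)
    (h : A.pcomp N = M.pcomp A) :
    A.adjoint.pcomp M = N.pcomp A.adjoint ∧ A.pcomp N.adjoint = M.adjoint.pcomp A := by
  obtain ⟨a, ha1, ha2⟩ := hA_inv
  obtain ⟨n, hn1, hn2⟩ := hN_inv
  obtain ⟨m, hm1, hm2⟩ := hM_inv
  have ha : IsInvOf a A := ⟨ha1, ha2⟩
  have hn' : IsInvOf n N := ⟨hn1, hn2⟩
  have hm' : IsInvOf m M := ⟨hm1, hm2⟩
  have hAadj : IsInvOf (ContinuousLinearMap.adjoint a) A.adjoint := ha.adjoint hA_dense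
  have hNadj : IsInvOf (ContinuousLinearMap.adjoint n) N.adjoint := hn'.adjoint hN_dense
  have hMadj : IsInvOf (ContinuousLinearMap.adjoint m) M.adjoint := hm'.adjoint hM_dense
  -- translate the hypothesis to bounded operators
  have hna : n * a = a * m := by
    ext y
    exact (pcomp_eq_pcomp_iff ha hn' hm' ha).mp h y
  -- normality of the bounded inverses
  have hcn : Commute (star n) n := by
    ext y
    have := (pcomp_eq_pcomp_iff hNadj hn' hn' hNadj).mp hN.2 y
    simp only [ContinuousLinearMap.mul_apply, ContinuousLinearMap.star_eq_adjoint]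
    exact this.symm
  have hcm : Commute (star m) m := by
    ext y
    have := (pcomp_eq_pcomp_iff hMadj hm' hm' hMadj).mp hM.2 y
    simp only [ContinuousLinearMap.mul_apply, ContinuousLinearMap.star_eq_adjoint]
    exact this.symm
  have hfp : star n * a = a * star m := fuglede_putnam_s11 hcn hcm hna
  constructor
  · refine (pcomp_eq_pcomp_iff hAadj hm' hn' hAadj).mpr fun y => ?_
    have hstar : star a * n = m * star a := by
      have := congrArg star hfp
      rwa [star_mul, star_mul, star_star, star_star] at this
    have := congrArg (fun T => T y) hstar
    simpa only [ContinuousLinearMap.mul_apply, ContinuousLinearMap.star_eq_adjoint] using this.symm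
  · refine (pcomp_eq_pcomp_iff ha hNadj hMadj ha).mpr fun y => ?_
    have := congrArg (fun T => T y) hfp
    simpa only [ContinuousLinearMap.mul_apply, ContinuousLinearMap.star_eq_adjoint] using this
end
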